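/- arXiv:1810.12277 — 13 statements merged into one kernel-verified Lean document; each statement's English description precedes it below -/
import Mathlib

section
/- If D is a simple digraph, C a directed cycle in D, and D' the digraph obtained from D by reversing all edges of C, then every arrangement π satisfies val_D(π) = val_{D'}(π). -/
open Finset

/-- Integer value of an edge under an arrangement: max {0, π(head) − π(tail)}. -/
def edgeVal {n : ℕ} (π : Equiv.Perm (Fin n)) (e : Fin n × Fin n) : ℤ :=
  max 0 ((π e.2 : ℤ) - (π e.1 : ℤ))

/-- Value of an arrangement (integer version). -/
def arrVal {n : ℕ} (E : Finset (Fin n × Fin n)) (π : Equiv.Perm (Fin n)) : ℤ :=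
  ∑ e ∈ E, edgeVal π e

/-- Value of an arrangement (natural-number version, using truncated subtraction). -/
def valN {n : ℕ} (E : Finset (Fin n × Fin n)) (π : Equiv.Perm (Fin n)) : ℕ :=
  ∑ e ∈ E, ((π e.2 : ℕ) - (π e.1 : ℕ))

/-- Size of the k-th cut of an arrangement (positions are 0-indexed, cuts 1-indexed:
`cutAt E π k` counts edges from the first k vertices to the rest). -/
def cutAt {n : ℕ} (E : Finset (Fin n × Fin n)) (π : Equiv.Perm (Fin n)) (k : ℕ) : ℕ :=
  (E.filter (fun e => (π e.1 : ℕ) < k ∧ k ≤ (π e.2 : ℕ))).card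

def outdeg {n : ℕ} (E : Finset (Fin n × Fin n)) (v : Fin n) : ℕ :=
  (E.filter (fun e => e.1 = v)).card

def indeg {n : ℕ} (E : Finset (Fin n × Fin n)) (v : Fin n) : ℕ :=
  (E.filter (fun e => e.2 = v)).card

/-- Number of edges in the directed cut from X to its complement. -/
def dicut {n : ℕ} (E : Finset (Fin n × Fin n)) (X : Finset (Fin n)) : ℕ :=
  (E.filter (fun e => e.1 ∈ X ∧ e.2 ∉ X)).card

/-- reversing a directed cycle of a digraph does not change the value
of any arrangement.  The cycle has k+2 ≥ 2 distinct vertices c 0, …, c (k+1). -/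
theorem stmt3 (n k : ℕ) (E Cyc : Finset (Fin n × Fin n))
    (hs : ∀ e ∈ E, e.1 ≠ e.2)
    (c : Fin (k + 2) → Fin n) (hinj : Function.Injective c)
    (hC : Cyc = (univ : Finset (Fin (k + 2))).image (fun i => (c i, c (i + 1))))
    (hsub : Cyc ⊆ E) (π : Equiv.Perm (Fin n)) :
    arrVal E π = arrVal (E \ Cyc) π + ∑ e ∈ Cyc, edgeVal π (e.2, e.1) := by

  have hsplit : arrVal E π = arrVal (E \ Cyc) π + ∑ e ∈ Cyc, edgeVal π e := by
    rw [arrVal, arrVal, ← Finset.sum_sdiff hsub]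
  rw [hsplit]
  congr 1
  -- difference of the two cycle sums telescopes to zero
  have hdiff : ∀ e : Fin n × Fin n,
      edgeVal π e - edgeVal π (e.2, e.1) = (π e.2 : ℤ) - (π e.1 : ℤ) := by
    intro e
    simp only [edgeVal, max_def]
    split_ifs <;> omega
  have key : ∑ e ∈ Cyc, ((π e.2 : ℤ) - (π e.1 : ℤ)) = 0 := by
    have hinj2 : Function.Injective (fun i : Fin (k + 2) => (c i, c (i + 1))) := by
      intro a b hab
      exact hinj (congrArg Prod.fst hab)
    rw [hC, Finset.sum_image (fun a _ b _ h => hinj2 h)]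
    simp only [Finset.sum_sub_distrib]
    rw [sub_eq_zero]
    exact Fintype.sum_equiv (Equiv.addRight 1) _ _ (fun i => rfl)
  have : ∑ e ∈ Cyc, edgeVal π e - ∑ e ∈ Cyc, edgeVal π (e.2, e.1) = 0 := by
    rw [← Finset.sum_sub_distrib]
    simpa only [hdiff] using key
  linarith
end

section
/- If D and D' are two orientations of the same undirected graph G such that every vertex has the same out-degree in D as in D', then every arrangement π satisfies val_D(π) = val_{D'}(π). -/
open Finset

/-- Sums of symmetric functions agree on any two orientations of the same graph. -/
lemma sym_sum {n : ℕ} (G : SimpleGraph (Fin n)) (E E' : Finset (Fin n × Fin n))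
    (hE : ∀ u v : Fin n, ((u, v) ∈ E → G.Adj u v) ∧ (G.Adj u v → ((u, v) ∈ E ↔ (v, u) ∉ E)))
    (hE' : ∀ u v : Fin n, ((u, v) ∈ E' → G.Adj u v) ∧ (G.Adj u v → ((u, v) ∈ E' ↔ (v, u) ∉ E')))
    (f : Fin n × Fin n → ℤ) (hf : ∀ e, f e.swap = f e) :
    ∑ e ∈ E, f e = ∑ e ∈ E', f e := by
  apply Finset.sum_nbij' (fun e => if e ∈ E' then e else e.swap)
    (fun e => if e ∈ E then e else e.swap)
  · intro e he
    by_cases h : e ∈ E'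
    · simpa [h]
    · simp only [h, if_false]
      have hadj := (hE e.1 e.2).1 he
      have := (hE' e.1 e.2).2 hadj
      have : (e.2, e.1) ∈ E' := by
        by_contra hc
        exact h (by simpa using this.2 hc)
      simpa [Prod.swap] using this
  · intro e he
    by_cases h : e ∈ E
    · simpa [h]
    · simp only [h, if_false]
      have hadj := (hE' e.1 e.2).1 he
      have := (hE e.1 e.2).2 hadj
      have : (e.2, e.1) ∈ E := by
        by_contra hc
        exact h (by simpa using this.2 hc)
      simpa [Prod.swap] using this
  · intro e he
    by_cases h : e ∈ E'
    · simp [h, he]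
    · simp only [h, if_false]
      have hadj := (hE e.1 e.2).1 he
      have hswap : (e.2, e.1) ∉ E := ((hE e.1 e.2).2 hadj).1 (by simpa using he)
      rw [if_neg (by simpa [Prod.swap] using hswap)]
      simp
  · intro e he
    by_cases h : e ∈ E
    · simp [h, he]
    · simp only [h, if_false]
      have hadj := (hE' e.1 e.2).1 he
      have hswap : (e.2, e.1) ∉ E' := ((hE' e.1 e.2).2 hadj).1 (by simpa using he)
      rw [if_neg (by simpa [Prod.swap] using hswap)]
      simp
  · intro e he
    by_cases h : e ∈ E'
    · simp [h]
    · simp [h, hf]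

lemma fiber_sum {n : ℕ} (E : Finset (Fin n × Fin n)) (π : Equiv.Perm (Fin n)) :
    ∑ e ∈ E, (π e.1 : ℤ) = ∑ v : Fin n, (outdeg E v : ℤ) * π v := by
  rw [← Finset.sum_fiberwise E (fun e => e.1) (fun e => (π e.1 : ℤ))]
  refine Finset.sum_congr rfl fun v _ => ?_
  have h : ∀ e ∈ E.filter (fun e => e.1 = v), (π e.1 : ℤ) = π v := by
    intro e he; rw [(Finset.mem_filter.mp he).2]
  rw [Finset.sum_congr rfl h, Finset.sum_const, outdeg, nsmul_eq_mul]

/-- two orientations of the same graph G with the same out-degree at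
every vertex give the same value to every arrangement. -/
theorem stmt4 (n : ℕ) (G : SimpleGraph (Fin n)) (E E' : Finset (Fin n × Fin n))
    (hE : ∀ u v : Fin n, ((u, v) ∈ E → G.Adj u v) ∧ (G.Adj u v → ((u, v) ∈ E ↔ (v, u) ∉ E)))
    (hE' : ∀ u v : Fin n, ((u, v) ∈ E' → G.Adj u v) ∧ (G.Adj u v → ((u, v) ∈ E' ↔ (v, u) ∉ E')))
    (hdeg : ∀ v, outdeg E v = outdeg E' v) (π : Equiv.Perm (Fin n)) :
    arrVal E π = arrVal E' π := by
  set g : Fin n × Fin n → ℤ := fun e => |(π e.2 : ℤ) - (π e.1 : ℤ)| + (π e.1 : ℤ) + (π e.2 : ℤ)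
    with hg
  have hgsym : ∀ e, g (Prod.swap e) = g e := by
    intro e
    simp only [hg, Prod.fst_swap, Prod.snd_swap, abs_sub_comm]
    ring
  have key : ∀ F : Finset (Fin n × Fin n),
      2 * arrVal F π = (∑ e ∈ F, g e) - 2 * ∑ e ∈ F, (π e.1 : ℤ) := by
    intro F
    rw [arrVal, Finset.mul_sum, Finset.mul_sum, ← Finset.sum_sub_distrib]
    refine Finset.sum_congr rfl fun e _ => ?_
    rw [edgeVal]
    rcases le_total ((π e.2 : ℤ) - (π e.1 : ℤ)) 0 with h | h
    · simp only [hg, max_eq_left h, abs_of_nonpos h]; ring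
    · simp only [hg, max_eq_right h, abs_of_nonneg h]; ring
  have h1 : ∑ e ∈ E, g e = ∑ e ∈ E', g e := sym_sum G E E' hE hE' g hgsym
  have h2 : ∑ e ∈ E, (π e.1 : ℤ) = ∑ e ∈ E', (π e.1 : ℤ) := by
    rw [fiber_sum, fiber_sum]
    exact Finset.sum_congr rfl fun v _ => by rw [hdeg]
  have := key E
  rw [h1, h2, ← key E'] at this
  linarith
end

section
/- If D is an Eulerian digraph (every vertex has equal in-degree and out-degree) and D' is obtained from D by reversing every edge, then every arrangement π satisfies val_D(π) = val_{D'}(π). -/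
open Finset

/-- if D is Eulerian, reversing all edges does not change the value of
any arrangement. -/
theorem stmt5 (n : ℕ) (E : Finset (Fin n × Fin n)) (hs : ∀ e ∈ E, e.1 ≠ e.2)
    (heul : ∀ v, outdeg E v = indeg E v) (π : Equiv.Perm (Fin n)) :
    arrVal E π = arrVal (E.image Prod.swap) π := by
  have hswap : arrVal (E.image Prod.swap) π = ∑ e ∈ E, edgeVal π e.swap := by
    unfold arrVal
    exact Finset.sum_image (fun a _ b _ h => Prod.swap_injective h)
  have h1 : ∑ e ∈ E, (π e.1 : ℤ) = ∑ v : Fin n, (outdeg E v : ℤ) * (π v : ℤ) := by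
    have := Finset.sum_fiberwise_of_maps_to' (s := E)
      (t := (Finset.univ : Finset (Fin n))) (g := Prod.fst)
      (fun (e : Fin n × Fin n) _ => Finset.mem_univ e.1) (fun v => ((π v : ℕ) : ℤ))
    rw [← this]
    refine Finset.sum_congr rfl fun v _ => ?_
    rw [Finset.sum_const, nsmul_eq_mul, outdeg]
  have h2 : ∑ e ∈ E, (π e.2 : ℤ) = ∑ v : Fin n, (indeg E v : ℤ) * (π v : ℤ) := by
    have := Finset.sum_fiberwise_of_maps_to' (s := E)
      (t := (Finset.univ : Finset (Fin n))) (g := Prod.snd)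
      (fun (e : Fin n × Fin n) _ => Finset.mem_univ e.2) (fun v => ((π v : ℕ) : ℤ))
    rw [← this]
    refine Finset.sum_congr rfl fun v _ => ?_
    rw [Finset.sum_const, nsmul_eq_mul, indeg]
  have key : ∑ e ∈ E, ((π e.2 : ℤ) - (π e.1 : ℤ)) = 0 := by
    rw [Finset.sum_sub_distrib, h1, h2]
    simp [heul]
  rw [hswap]
  have hdiff : ∀ e ∈ E, edgeVal π e = edgeVal π e.swap + ((π e.2 : ℤ) - (π e.1 : ℤ)) := by
    intro e _
    simp only [edgeVal, Prod.fst_swap, Prod.snd_swap]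
    rcases le_total ((π e.1 : ℕ) : ℤ) ((π e.2 : ℕ) : ℤ) with h | h
    · rw [max_eq_right (by omega), max_eq_left (by omega)]; omega
    · rw [max_eq_left (by omega), max_eq_right (by omega)]; omega
  rw [arrVal, Finset.sum_congr rfl hdiff, Finset.sum_add_distrib, key, add_zero]
end

section
/- In a maximal arrangement of a digraph, the vertex levels are non-increasing from left to right: if π = (v_1,...,v_n) is an arrangement such that no transposition of two consecutive vertices yields an arrangement whose cut-size signature weakly dominates and strictly exceeds that of π in some coordinate, then l(v_1) ≥ l(v_2) ≥ ... ≥ l(v_n). -/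
open Finset

lemma swap_val {n : ℕ} (i j x : Fin n) (hj : (j:ℕ) = (i:ℕ)+1) :
    ((Equiv.swap i j x : Fin n) : ℕ) =
      if (x:ℕ) = (i:ℕ) then (i:ℕ)+1 else if (x:ℕ) = (i:ℕ)+1 then (i:ℕ) else (x:ℕ) := by
  rw [Equiv.swap_apply_def]
  split_ifs with h1 h2 <;> simp_all [Fin.ext_iff]

lemma key {n : ℕ} (E : Finset (Fin n × Fin n)) (hs : ∀ e ∈ E, e.1 ≠ e.2)
    (π : Equiv.Perm (Fin n)) (i j : Fin n) (hj : (j:ℕ) = (i:ℕ)+1) :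
    cutAt E π (i:ℕ) + cutAt E π ((i:ℕ)+1+1)
      ≤ cutAt E π ((i:ℕ)+1) + cutAt E (π.trans (Equiv.swap i j)) ((i:ℕ)+1) := by
  simp only [cutAt, Finset.card_filter, ← Finset.sum_add_distrib]
  apply Finset.sum_le_sum
  intro e he
  have hab : ((π e.1 : ℕ)) ≠ (π e.2 : ℕ) := by
    intro h
    exact hs e he (π.injective (Fin.val_injective h))
  simp only [Equiv.trans_apply]
  simp only [swap_val i j (π e.1) hj, swap_val i j (π e.2) hj]
  split_ifs <;> omega

lemma cut_other {n : ℕ} (E : Finset (Fin n × Fin n)) (π : Equiv.Perm (Fin n))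
    (i j : Fin n) (hj : (j:ℕ) = (i:ℕ)+1) (k : ℕ) (hk : k ≠ (i:ℕ)+1) :
    cutAt E (π.trans (Equiv.swap i j)) k = cutAt E π k := by
  unfold cutAt
  congr 1
  apply Finset.filter_congr
  intro e he
  simp only [Equiv.trans_apply]
  simp only [swap_val i j (π e.1) hj, swap_val i j (π e.2) hj]
  split_ifs <;> omega

/-- if no transposition of two consecutive vertices of π produces an
arrangement whose signature weakly dominates that of π and strictly exceeds it in some
coordinate, then the levels of the vertices of π are non-increasing from left to right. -/
theorem stmt7 (n : ℕ) (E : Finset (Fin n × Fin n)) (hs : ∀ e ∈ E, e.1 ≠ e.2)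
    (π : Equiv.Perm (Fin n))
    (hmaxl : ∀ i j : Fin n, (j : ℕ) = (i : ℕ) + 1 →
      ¬ ((∀ k, cutAt E π k ≤ cutAt E (π.trans (Equiv.swap i j)) k) ∧
         ∃ k, cutAt E π k < cutAt E (π.trans (Equiv.swap i j)) k)) :
    ∀ u v : Fin n, (π u : ℕ) ≤ (π v : ℕ) →
      (cutAt E π ((π v : ℕ) + 1) : ℤ) - (cutAt E π (π v : ℕ) : ℤ)
        ≤ (cutAt E π ((π u : ℕ) + 1) : ℤ) - (cutAt E π (π u : ℕ) : ℤ) := by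

  have hb : ∀ (i j : Fin n), (j:ℕ) = (i:ℕ)+1 →
      cutAt E (π.trans (Equiv.swap i j)) ((i:ℕ)+1) ≤ cutAt E π ((i:ℕ)+1) := by
    intro i j hj
    by_contra h
    push_neg at h
    refine hmaxl i j hj ⟨fun k => ?_, ⟨(i:ℕ)+1, h⟩⟩
    rcases eq_or_ne k ((i:ℕ)+1) with rfl | hk
    · exact h.le
    · exact (cut_other E π i j hj k hk).ge
  have hconc : ∀ p : ℕ, p + 1 < n →
      (cutAt E π (p+1+1) : ℤ) - cutAt E π (p+1) ≤ (cutAt E π (p+1) : ℤ) - cutAt E π p := by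
    intro p hp
    have hi : p < n := by omega
    have h1 := key E hs π ⟨p, hi⟩ ⟨p+1, hp⟩ rfl
    have h2 := hb ⟨p, hi⟩ ⟨p+1, hp⟩ rfl
    simp only [Fin.val_mk] at h1 h2
    omega
  intro u v huv
  suffices h : ∀ q, q < n → ∀ p, p ≤ q →
      (cutAt E π (q+1):ℤ) - cutAt E π q ≤ (cutAt E π (p+1):ℤ) - cutAt E π p from
    h (π v) (π v).isLt (π u) huv
  intro q
  induction q with
  | zero =>
    intro _ p hp
    obtain rfl : p = 0 := Nat.le_zero.mp hp
    exact le_refl _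
  | succ q ih =>
    intro hq p hp
    rcases Nat.lt_or_ge p (q+1) with h | h
    · exact (hconc q hq).trans (ih (by omega) p (by omega))
    · obtain rfl : p = q+1 := by omega
      exact le_refl _
end

section
/- For every simple digraph D on n ≥ 2 vertices, if t = MaxDiCut(D) is the size of a largest directed cut of D, then (n/2)·t ≤ MaxDLA(D) ≤ (n−1)·t, where MaxDLA(D) is the maximum value of an arrangement of D. -/
open Finset

/-- Size of a maximum directed cut of E. -/
def maxDiCut {n : ℕ} (E : Finset (Fin n × Fin n)) : ℕ :=
  (univ : Finset (Finset (Fin n))).sup (dicut E)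

/-- Maximum value of an arrangement of E. -/
def maxDLA {n : ℕ} (E : Finset (Fin n × Fin n)) : ℕ :=
  (univ : Finset (Equiv.Perm (Fin n))).sup (valN E)

/-!
The value of an arrangement is the sum of its `n - 1` prefix cuts `cutAt E π k`, and each of
them is a directed cut, which gives the upper bound. For the lower bound, place a maximum
directed cut `X` on the first `#X` positions; this arrangement and the one obtained from it by
reversing each of the two blocks give every edge from `X` to its complement total length `n`,
so one of them has value at least `n / 2` times the cut.
-/

section Arrangement

variable {n : ℕ}

lemma valN_eq_sum_cutAt (E : Finset (Fin n × Fin n)) (π : Equiv.Perm (Fin n)) :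
    valN E π = ∑ k ∈ Ico 1 n, cutAt E π k := by
  unfold valN cutAt
  simp_rw [card_filter]
  rw [sum_comm]
  refine sum_congr rfl fun e _ => ?_
  rw [← card_filter]
  have hfe : (Ico 1 n).filter (fun k => (π e.1 : ℕ) < k ∧ k ≤ (π e.2 : ℕ))
      = Ico ((π e.1 : ℕ) + 1) ((π e.2 : ℕ) + 1) := by
    ext k
    have := (π e.2).isLt
    simp only [mem_filter, mem_Ico]
    omega
  rw [hfe, Nat.card_Ico]
  omega

lemma cutAt_eq_dicut (E : Finset (Fin n × Fin n)) (π : Equiv.Perm (Fin n)) (k : ℕ) :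
    cutAt E π k = dicut E {v | (π v : ℕ) < k} := by
  unfold cutAt dicut
  congr 1
  refine filter_congr fun e _ => ?_
  simp only [mem_filter, mem_univ, true_and]
  omega

lemma dicut_le_maxDiCut (E : Finset (Fin n × Fin n)) (X : Finset (Fin n)) :
    dicut E X ≤ maxDiCut E :=
  le_sup (mem_univ X)

lemma valN_le_maxDLA (E : Finset (Fin n × Fin n)) (π : Equiv.Perm (Fin n)) :
    valN E π ≤ maxDLA E :=
  le_sup (mem_univ π)

lemma valN_le_mul_maxDiCut (E : Finset (Fin n × Fin n)) (π : Equiv.Perm (Fin n)) :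
    valN E π ≤ (n - 1) * maxDiCut E := by
  rw [valN_eq_sum_cutAt]
  calc ∑ k ∈ Ico 1 n, cutAt E π k ≤ #(Ico 1 n) • maxDiCut E :=
        sum_le_card_nsmul _ _ _ fun k _ => (cutAt_eq_dicut E π k).trans_le (dicut_le_maxDiCut ..)
    _ = (n - 1) * maxDiCut E := by rw [Nat.card_Ico, smul_eq_mul]

lemma maxDLA_le_mul_maxDiCut (E : Finset (Fin n × Fin n)) :
    maxDLA E ≤ (n - 1) * maxDiCut E :=
  Finset.sup_le fun π _ => valN_le_mul_maxDiCut E π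

lemma exists_perm_lt_card_iff_mem (X : Finset (Fin n)) :
    ∃ π : Equiv.Perm (Fin n), ∀ v, (π v : ℕ) < #X ↔ v ∈ X := by
  have hX : #X ≤ n := by simpa using X.card_le_univ
  let e₁ : {v // v ∈ X} ≃ Fin #X := X.equivFin
  let e₂ : {v // v ∉ X} ≃ Fin (n - #X) :=
    ((Equiv.subtypeEquivRight fun v => by simp).trans Xᶜ.equivFin).trans
      (finCongr (by rw [card_compl, Fintype.card_fin]))
  refine ⟨(Equiv.sumCompl (· ∈ X)).symm.trans ((e₁.sumCongr e₂).trans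
    (finSumFinEquiv.trans (finCongr (Nat.add_sub_cancel' hX)))), fun v => ?_⟩
  by_cases hv : v ∈ X
  · simp [Equiv.sumCompl_symm_apply_of_pos hv, hv]
  · simp [Equiv.sumCompl_symm_apply_of_neg hv, hv]

/-- Reverses the order of the positions `0, …, a - 1` and, separately, of `a, …, n - 1`. -/
def blockRev (a : ℕ) (ha : a ≤ n) : Equiv.Perm (Fin n) :=
  Function.Involutive.toPerm
    (fun k => ⟨if (k : ℕ) < a then a - 1 - k else n - 1 + a - k, by split_ifs <;> omega⟩)
    fun k => by
      have := k.isLt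
      ext
      simp only
      split_ifs <;> omega

lemma coe_blockRev_apply {a : ℕ} (ha : a ≤ n) (k : Fin n) :
    (blockRev a ha k : ℕ) = if (k : ℕ) < a then a - 1 - k else n - 1 + a - k :=
  rfl

lemma sub_add_blockRev_sub {a : ℕ} (ha : a ≤ n) {i j : Fin n} (hi : (i : ℕ) < a)
    (hj : a ≤ (j : ℕ)) : (j - i : ℕ) + (blockRev a ha j - blockRev a ha i : ℕ) = n := by
  have := j.isLt
  rw [coe_blockRev_apply, coe_blockRev_apply, if_pos hi, if_neg (not_lt.2 hj)]
  omega

lemma mul_dicut_le_two_mul_maxDLA (E : Finset (Fin n × Fin n)) (X : Finset (Fin n)) :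
    n * dicut E X ≤ 2 * maxDLA E := by
  obtain ⟨π, hπ⟩ := exists_perm_lt_card_iff_mem X
  have hX : #X ≤ n := by simpa using X.card_le_univ
  let π' := π.trans (blockRev #X hX)
  have hlen : ∀ e ∈ E.filter (fun e => e.1 ∈ X ∧ e.2 ∉ X),
      n = ((π e.2 : ℕ) - π e.1) + ((π' e.2 : ℕ) - π' e.1) := by
    intro e he
    obtain ⟨-, h₁, h₂⟩ := mem_filter.1 he
    exact (sub_add_blockRev_sub hX ((hπ _).2 h₁) (not_lt.1 fun h => h₂ ((hπ _).1 h))).symm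
  calc n * dicut E X = ∑ e ∈ E.filter (fun e => e.1 ∈ X ∧ e.2 ∉ X), n := by
        rw [sum_const, smul_eq_mul, mul_comm, dicut]
    _ = ∑ e ∈ E.filter (fun e => e.1 ∈ X ∧ e.2 ∉ X),
          (((π e.2 : ℕ) - π e.1) + ((π' e.2 : ℕ) - π' e.1)) := sum_congr rfl hlen
    _ ≤ ∑ e ∈ E, (((π e.2 : ℕ) - π e.1) + ((π' e.2 : ℕ) - π' e.1)) :=
        sum_le_sum_of_subset (filter_subset _ _)
    _ = valN E π + valN E π' := sum_add_distrib
    _ ≤ 2 * maxDLA E := by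
        have := valN_le_maxDLA E π
        have := valN_le_maxDLA E π'
        omega

lemma mul_maxDiCut_le_two_mul_maxDLA (E : Finset (Fin n × Fin n)) :
    n * maxDiCut E ≤ 2 * maxDLA E := by
  obtain ⟨X, -, hX⟩ := exists_mem_eq_sup (univ : Finset (Finset (Fin n))) univ_nonempty (dicut E)
  rw [maxDiCut, hX]
  exact mul_dicut_le_two_mul_maxDLA E X

end Arrangement

theorem stmt8_general (n : ℕ) (E : Finset (Fin n × Fin n)) :
    n * maxDiCut E ≤ 2 * maxDLA E ∧ maxDLA E ≤ (n - 1) * maxDiCut E :=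
  ⟨mul_maxDiCut_le_two_mul_maxDLA E, maxDLA_le_mul_maxDiCut E⟩

/-- (n/2)·MaxDiCut(D) ≤ MaxDLA(D) ≤ (n−1)·MaxDiCut(D). -/
theorem stmt8 (n : ℕ) (hn : 2 ≤ n) (E : Finset (Fin n × Fin n))
    (hs : ∀ e ∈ E, e.1 ≠ e.2) :
    n * maxDiCut E ≤ 2 * maxDLA E ∧ maxDLA E ≤ (n - 1) * maxDiCut E :=
  stmt8_general n E
end

section
/- For every simple digraph D on n vertices, any maximum-value arrangement of D contains a cut (i.e., some E({v_1,...,v_k}, {v_{k+1},...,v_n})) of size at least MaxDiCut(D)/2. -/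
open Finset

lemma exists_initialSeg_perm {n : ℕ} (X : Finset (Fin n)) :
    ∃ ρ : Equiv.Perm (Fin n), ∀ v, v ∈ X ↔ (ρ v : ℕ) < X.card := by
  classical
  have h : X.card + Xᶜ.card = n := by
    simpa using X.card_add_card_compl
  let e1 : Fin n ≃ Fin (X.card + Xᶜ.card) := finCongr h.symm
  let e2 : Fin (X.card + Xᶜ.card) ≃ Fin X.card ⊕ Fin Xᶜ.card := finSumFinEquiv.symm
  let e3 : Fin X.card ⊕ Fin Xᶜ.card ≃ ↥X ⊕ ↥(Xᶜ) :=
    Equiv.sumCongr (X.orderIsoOfFin rfl).toEquiv ((Xᶜ).orderIsoOfFin rfl).toEquiv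
  let e4 : ↥X ⊕ ↥(Xᶜ) ≃ {x : Fin n // x ∈ X} ⊕ {x : Fin n // ¬ x ∈ X} :=
    Equiv.sumCongr (Equiv.refl _) (Equiv.subtypeEquivRight (fun x => Finset.mem_compl))
  let e5 : {x : Fin n // x ∈ X} ⊕ {x : Fin n // ¬ x ∈ X} ≃ Fin n :=
    Equiv.sumCompl (· ∈ X)
  let σ : Equiv.Perm (Fin n) := e1.trans (e2.trans (e3.trans (e4.trans e5)))
  have key : ∀ i : Fin n, (σ i ∈ X ↔ (i : ℕ) < X.card) := by
    intro i
    obtain ⟨j, hj⟩ : ∃ j, j = e2 (e1 i) := ⟨_, rfl⟩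
    have hival : (i : ℕ) = ((finSumFinEquiv j : Fin (X.card + Xᶜ.card)) : ℕ) := by
      rw [hj]; simp [e2, e1]
    have hσ : σ i = e5 (e4 (e3 j)) := by simp [σ, Equiv.trans_apply, ← hj]
    rcases j with a | b
    · have h1 : σ i ∈ X := by
        rw [hσ]
        simp [e3, e4, e5]
      have h2 : (i : ℕ) < X.card := by rw [hival]; simpa using a.isLt
      simp [h1, h2]
    · have h1 : σ i ∉ X := by
        rw [hσ]
        simp only [e3, e4, e5, Equiv.sumCongr_apply, Sum.map_inr, Equiv.sumCompl_apply_inr]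
        exact ((Equiv.subtypeEquivRight (fun x => Finset.mem_compl)) (((Xᶜ).orderIsoOfFin rfl).toEquiv b)).2
      have h2 : ¬ (i : ℕ) < X.card := by rw [hival]; simp
      simp [h1, h2]
  refine ⟨σ.symm, fun v => ?_⟩
  have := key (σ.symm v)
  rwa [Equiv.apply_symm_apply] at this

lemma exists_revPerm {n p : ℕ} (hp : p ≤ n) (hn : 0 < n) :
    ∃ ι : Equiv.Perm (Fin n), ∀ i : Fin n,
      ((i : ℕ) < p → (ι i : ℕ) = p - 1 - i) ∧ (p ≤ (i : ℕ) → (ι i : ℕ) = n - 1 + p - i) := by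
  let f : Fin n → Fin n := fun i =>
    if h : (i : ℕ) < p then ⟨p - 1 - i, by omega⟩ else ⟨n - 1 + p - i, by omega⟩
  have hf : Function.Involutive f := by
    intro i
    by_cases h : (i : ℕ) < p
    · have h1 : f i = ⟨p - 1 - i, by omega⟩ := dif_pos h
      rw [h1]
      have h2 : p - 1 - (i:ℕ) < p := by omega
      simp only [f, dif_pos h2]
      exact Fin.ext (by simp; omega)
    · have h1 : f i = ⟨n - 1 + p - i, by omega⟩ := dif_neg h
      rw [h1]
      have h2 : ¬ (n - 1 + p - (i:ℕ) < p) := by omega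
      simp only [f, dif_neg h2]
      exact Fin.ext (by simp; omega)
  refine ⟨hf.toPerm, fun i => ⟨fun h => ?_, fun h => ?_⟩⟩
  · show ((f i : Fin n) : ℕ) = _
    simp [f, dif_pos h]
  · show ((f i : Fin n) : ℕ) = _
    simp [f, dif_neg (by omega : ¬ (i:ℕ) < p)]

lemma sum_cutAt {n : ℕ} (E : Finset (Fin n × Fin n)) (π : Equiv.Perm (Fin n)) :
    ∑ k ∈ Icc 1 (n - 1), cutAt E π k = valN E π := by
  unfold cutAt valN
  simp_rw [Finset.card_filter]
  rw [Finset.sum_comm]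
  refine Finset.sum_congr rfl fun e _ => ?_
  rw [← Finset.card_filter]
  have hfil : (Icc 1 (n-1)).filter (fun k => (π e.1 : ℕ) < k ∧ k ≤ (π e.2 : ℕ))
      = Icc ((π e.1 : ℕ) + 1) (π e.2 : ℕ) := by
    ext k
    have h1 : (π e.1 : ℕ) < n := (π e.1).isLt
    have h2 : (π e.2 : ℕ) < n := (π e.2).isLt
    simp only [mem_filter, mem_Icc]
    omega
  rw [hfil, Nat.card_Icc]
  omega

/-- any maximum-value arrangement contains a cut of size ≥ MaxDiCut(D)/2. -/
theorem stmt9 (n : ℕ) (hn : 2 ≤ n) (E : Finset (Fin n × Fin n))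
    (hs : ∀ e ∈ E, e.1 ≠ e.2) (π : Equiv.Perm (Fin n))
    (hmax : valN E π = maxDLA E) :
    ∃ k ∈ Icc 1 (n - 1), maxDiCut E ≤ 2 * cutAt E π k := by
  classical
  -- a maximizing cut set X
  obtain ⟨X, -, hX⟩ := Finset.exists_mem_eq_sup (univ : Finset (Finset (Fin n)))
    univ_nonempty (dicut E)
  set m := maxDiCut E with hm
  have hmX : m = dicut E X := hX
  set p := X.card with hpdef
  have hpn : p ≤ n := by simpa using X.card_le_univ
  obtain ⟨ρ, hρ⟩ := exists_initialSeg_perm X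
  obtain ⟨ι, hι⟩ := exists_revPerm hpn (by omega)
  set ρ' : Equiv.Perm (Fin n) := ρ.trans ι with hρ'def
  -- key inequality: valN E ρ + valN E ρ' ≥ n * m
  have hkey : n * m ≤ valN E ρ + valN E ρ' := by
    have hsub : ∀ e ∈ E.filter (fun e => e.1 ∈ X ∧ e.2 ∉ X),
        n = ((ρ e.2 : ℕ) - (ρ e.1 : ℕ)) + ((ρ' e.2 : ℕ) - (ρ' e.1 : ℕ)) := by
      intro e he
      rw [mem_filter] at he
      have hb : (ρ e.1 : ℕ) < p := (hρ e.1).mp he.2.1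
      have ha : ¬ (ρ e.2 : ℕ) < p := fun h => he.2.2 ((hρ e.2).mpr h)
      have han : (ρ e.2 : ℕ) < n := (ρ e.2).isLt
      have h1 : (ρ' e.1 : ℕ) = p - 1 - (ρ e.1 : ℕ) := (hι (ρ e.1)).1 hb
      have h2 : (ρ' e.2 : ℕ) = n - 1 + p - (ρ e.2 : ℕ) := (hι (ρ e.2)).2 (by omega)
      rw [h1, h2]
      omega
    calc n * m = ∑ _e ∈ E.filter (fun e => e.1 ∈ X ∧ e.2 ∉ X), n := by
          rw [Finset.sum_const, hmX, dicut]; ring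
      _ = ∑ e ∈ E.filter (fun e => e.1 ∈ X ∧ e.2 ∉ X),
            (((ρ e.2 : ℕ) - (ρ e.1 : ℕ)) + ((ρ' e.2 : ℕ) - (ρ' e.1 : ℕ))) :=
          Finset.sum_congr rfl hsub
      _ ≤ ∑ e ∈ E, (((ρ e.2 : ℕ) - (ρ e.1 : ℕ)) + ((ρ' e.2 : ℕ) - (ρ' e.1 : ℕ))) :=
          Finset.sum_le_sum_of_subset (Finset.filter_subset _ _)
      _ = valN E ρ + valN E ρ' := by rw [valN, valN, Finset.sum_add_distrib]
  have hρle : valN E ρ ≤ valN E π := hmax ▸ Finset.le_sup (mem_univ ρ)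
  have hρ'le : valN E ρ' ≤ valN E π := hmax ▸ Finset.le_sup (mem_univ ρ')
  have h2v : n * m ≤ 2 * valN E π := by omega
  -- the best cut of π
  obtain ⟨k, hk, hksup⟩ := Finset.exists_mem_eq_sup (Icc 1 (n-1))
    (by rw [nonempty_Icc]; omega) (cutAt E π)
  refine ⟨k, hk, ?_⟩
  have hsumle : valN E π ≤ (n - 1) * cutAt E π k := by
    rw [← sum_cutAt E π]
    calc ∑ j ∈ Icc 1 (n-1), cutAt E π j ≤ (Icc 1 (n-1)).card * cutAt E π k := by
          apply Finset.sum_le_card_nsmul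
          intro j hj
          exact hksup ▸ Finset.le_sup hj
      _ = (n - 1) * cutAt E π k := by rw [Nat.card_Icc, Nat.add_sub_cancel]
  have hfin : m * (n - 1) ≤ (2 * cutAt E π k) * (n - 1) := by
    calc m * (n - 1) ≤ m * n := Nat.mul_le_mul_left m (by omega)
      _ = n * m := Nat.mul_comm _ _
      _ ≤ 2 * valN E π := h2v
      _ ≤ 2 * ((n-1) * cutAt E π k) := by omega
      _ = (2 * cutAt E π k) * (n - 1) := by ring
  exact Nat.le_of_mul_le_mul_right hfin (by omega)
end

section
/- Let D be a simple digraph on n ≥ 1 vertices with at least one edge, let k ≤ n² be a positive integer, and let D' be obtained from D by adding n³ isolated vertices. Then D has a directed cut of size at least k if and only if D' has an arrangement of value at least k·n³. -/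
/-!
Summing over the thresholds `j`, the value of an arrangement equals the total size of the cuts
between its first `j` positions and the rest, each of which is a directed cut of `D`; so with
`N = n + n³` positions, all cuts of `D` of size `< k` would give a value at most `N (k - 1)`,
which is `< k n³` because `k ≤ n²`. Conversely, placing the isolated vertices between `X` and
its complement stretches every edge of `E(X, Xᶜ)` over all `n³` of them.
-/

open Finset

lemma valN_image_map {n N : ℕ} (E : Finset (Fin n × Fin n)) (π : Equiv.Perm (Fin N))
    {g : Fin n → Fin N} (hg : Function.Injective g) :
    valN (E.image fun e => (g e.1, g e.2)) π = ∑ e ∈ E, ((π (g e.2) : ℕ) - π (g e.1)) := by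
  refine sum_image fun a _ b _ hab => ?_
  simp only [Prod.mk.injEq] at hab
  exact Prod.ext (hg hab.1) (hg hab.2)

lemma exists_perm_lt_of_lt {N : ℕ} {α : Type*} [LinearOrder α] (f : Fin N → α) :
    ∃ π : Equiv.Perm (Fin N), ∀ a b, f a < f b → π a < π b := by
  refine ⟨(Tuple.sort f)⁻¹, fun a b hab => (Tuple.monotone_sort f).reflect_lt ?_⟩
  simpa [Equiv.Perm.inv_def] using hab

lemma card_le_sub_of_between {N : ℕ} {α : Type*} [LinearOrder α] {f : Fin N → α}
    {π : Equiv.Perm (Fin N)} (hπ : ∀ a b, f a < f b → π a < π b) {a b : Fin N}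
    {C : Finset (Fin N)} (hC : ∀ c ∈ C, f a < f c ∧ f c < f b) :
    #C ≤ (π b : ℕ) - π a := by
  calc #C = #(C.image fun c => (π c : ℕ)) :=
        (card_image_of_injective C (Fin.val_injective.comp π.injective)).symm
    _ ≤ #(Ioc (π a : ℕ) (π b)) := by
        refine card_le_card fun j hj => ?_
        obtain ⟨c, hc, rfl⟩ := mem_image.1 hj
        have := hC c hc
        exact mem_Ioc.2 ⟨hπ a c this.1, (hπ c b this.2).le⟩
    _ = (π b : ℕ) - π a := Nat.card_Ioc _ _

lemma sum_sub_eq_sum_dicut {n N : ℕ} (E : Finset (Fin n × Fin n)) {p : Fin n → ℕ}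
    (hp : ∀ v, p v < N) :
    ∑ e ∈ E, (p e.2 - p e.1) = ∑ j ∈ range N, dicut E {v | p v < j} := by
  have hedge : ∀ e : Fin n × Fin n,
      p e.2 - p e.1 = ∑ j ∈ range N, if p e.1 < j ∧ ¬ p e.2 < j then 1 else 0 := by
    intro e
    rw [← card_filter, ← Nat.card_Ioc]
    congr 1
    ext j
    simp only [mem_filter, mem_range, mem_Ioc, not_lt]
    have := hp e.2
    constructor
    · rintro ⟨h₁, h₂⟩; exact ⟨by omega, h₁, h₂⟩
    · rintro ⟨-, h⟩; exact h
  simp only [dicut, card_filter, mem_filter, mem_univ, true_and]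
  rw [sum_congr rfl fun e _ => hedge e, sum_comm]

lemma exists_mul_dicut_ge {n N : ℕ} (E : Finset (Fin n × Fin n)) {p : Fin n → ℕ}
    (hp : ∀ v, p v < N) :
    ∃ X : Finset (Fin n), ∑ e ∈ E, (p e.2 - p e.1) ≤ N * dicut E X := by
  obtain ⟨X, -, hX⟩ := (univ : Finset (Finset (Fin n))).exists_max_image (dicut E) univ_nonempty
  refine ⟨X, ?_⟩
  rw [sum_sub_eq_sum_dicut E hp]
  calc ∑ j ∈ range N, dicut E {v | p v < j} ≤ ∑ _j ∈ range N, dicut E X :=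
        sum_le_sum fun j _ => hX _ (mem_univ _)
    _ = N * dicut E X := by rw [sum_const, card_range, smul_eq_mul]

lemma exists_valN_ge_mul_dicut {n m : ℕ} (E : Finset (Fin n × Fin n)) (X : Finset (Fin n)) :
    ∃ π : Equiv.Perm (Fin (n + m)),
      dicut E X * m ≤ valN (E.image fun e => (Fin.castAdd m e.1, Fin.castAdd m e.2)) π := by
  let f : Fin (n + m) → ℕ := Fin.append (fun v => if v ∈ X then 0 else 2) fun _ => 1
  obtain ⟨π, hπ⟩ := exists_perm_lt_of_lt f
  refine ⟨π, ?_⟩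
  have hstretch : ∀ e ∈ E.filter (fun e => e.1 ∈ X ∧ e.2 ∉ X),
      m ≤ (π (Fin.castAdd m e.2) : ℕ) - π (Fin.castAdd m e.1) := by
    intro e he
    obtain ⟨-, h₁, h₂⟩ := mem_filter.1 he
    have hC : ∀ c ∈ univ.map (Fin.natAddEmb n),
        f (Fin.castAdd m e.1) < f c ∧ f c < f (Fin.castAdd m e.2) := by
      intro c hc
      obtain ⟨i, -, rfl⟩ := mem_map.1 hc
      simp [f, Fin.append_left, Fin.append_right, h₁, h₂]
    simpa using card_le_sub_of_between hπ hC
  rw [valN_image_map E π (Fin.castAdd_injective n m)]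
  calc dicut E X * m = ∑ _e ∈ E.filter (fun e => e.1 ∈ X ∧ e.2 ∉ X), m := by
        rw [sum_const, smul_eq_mul, dicut]
    _ ≤ ∑ e ∈ E.filter (fun e => e.1 ∈ X ∧ e.2 ∉ X),
          ((π (Fin.castAdd m e.2) : ℕ) - π (Fin.castAdd m e.1)) := sum_le_sum hstretch
    _ ≤ ∑ e ∈ E, ((π (Fin.castAdd m e.2) : ℕ) - π (Fin.castAdd m e.1)) :=
        sum_le_sum_of_subset (filter_subset _ _)

lemma le_of_mul_cube_le_mul {n k d : ℕ} (hk : k ≤ n ^ 2) (h : k * n ^ 3 ≤ (n + n ^ 3) * d) :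
    k ≤ d := by
  by_contra! hd
  rcases Nat.eq_zero_or_pos n with rfl | hn
  · rw [sq, zero_mul] at hk; omega
  have hcube : n ^ 3 * (d + 1) ≤ n * d + n ^ 3 * d :=
    calc n ^ 3 * (d + 1) ≤ n ^ 3 * k := Nat.mul_le_mul_left _ hd
      _ ≤ (n + n ^ 3) * d := by rw [mul_comm]; exact h
      _ = n * d + n ^ 3 * d := add_mul _ _ _
  have hlt : n * d < n * k := Nat.mul_lt_mul_of_pos_left hd hn
  have hle : n * k ≤ n ^ 3 := by
    calc n * k ≤ n * n ^ 2 := Nat.mul_le_mul_left _ hk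
      _ = n ^ 3 := by ring
  linarith

theorem stmt10_general (n k : ℕ) (hk2 : k ≤ n ^ 2)
    (E : Finset (Fin n × Fin n)) :
    (∃ X : Finset (Fin n), k ≤ dicut E X) ↔
      (∃ π : Equiv.Perm (Fin (n + n ^ 3)),
        k * n ^ 3 ≤
          valN (E.image (fun e => (Fin.castAdd (n ^ 3) e.1, Fin.castAdd (n ^ 3) e.2))) π) := by
  constructor
  · rintro ⟨X, hX⟩
    obtain ⟨π, hπ⟩ := exists_valN_ge_mul_dicut (m := n ^ 3) E X
    exact ⟨π, (Nat.mul_le_mul_right _ hX).trans hπ⟩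
  · rintro ⟨π, hπ⟩
    obtain ⟨X, hX⟩ := exists_mul_dicut_ge E (p := fun v => (π (Fin.castAdd (n ^ 3) v) : ℕ))
      fun v => (π _).is_lt
    rw [valN_image_map E π (Fin.castAdd_injective n (n ^ 3))] at hπ
    exact ⟨X, le_of_mul_cube_le_mul hk2 (hπ.trans hX)⟩

/-- D has a directed cut of size ≥ k iff D plus n³ isolated vertices has
an arrangement of value ≥ k·n³ (for 1 ≤ k ≤ n², D with at least one edge). -/
theorem stmt10 (n k : ℕ) (hn : 1 ≤ n) (hk : 1 ≤ k) (hk2 : k ≤ n ^ 2)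
    (E : Finset (Fin n × Fin n)) (hs : ∀ e ∈ E, e.1 ≠ e.2) (hne : E.Nonempty) :
    (∃ X : Finset (Fin n), k ≤ dicut E X) ↔
      (∃ π : Equiv.Perm (Fin (n + n ^ 3)),
        k * n ^ 3 ≤
          valN (E.image (fun e => (Fin.castAdd (n ^ 3) e.1, Fin.castAdd (n ^ 3) e.2))) π) :=
  stmt10_general n k hk2 E
end

section
/- Let D be an orientation of a bipartite graph with parts X and Y with all edges directed from X to Y, and let t = |E(D)| and n = |X| + |Y|. If π lists the vertices of X in non-increasing order of out-degree followed by the vertices of Y in non-decreasing order of in-degree, then val_D(π) ≥ (n/2)·t. -/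
open Finset

/-- Counting positions `≤ k` under a permutation of `Fin n`. -/
lemma card_pos_le {n : ℕ} (π : Equiv.Perm (Fin n)) (k : Fin n) :
    (univ.filter fun u : Fin n => (π u : ℕ) ≤ (k : ℕ)).card = (k : ℕ) + 1 := by
  have h1 : (univ.filter fun u : Fin n => (π u : ℕ) ≤ (k : ℕ))
      = (univ.filter fun j : Fin n => (j : ℕ) ≤ (k : ℕ)).image π.symm := by
    ext u
    simp only [Finset.mem_image, mem_filter, mem_univ, true_and]
    constructor
    · intro h; exact ⟨π u, h, by simp⟩
    · rintro ⟨j, hj, rfl⟩; simpa using hj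
  have h2 : (univ.filter fun j : Fin n => (j : ℕ) ≤ (k : ℕ)) = Finset.Iic k := by
    ext j; simp only [mem_filter, mem_univ, true_and, Finset.mem_Iic, Fin.le_def]
  rw [h1, Finset.card_image_of_injective _ π.symm.injective, h2, Fin.card_Iic]

/-- Counting positions `< k` under a permutation of `Fin n`. -/
lemma card_pos_lt {n : ℕ} (π : Equiv.Perm (Fin n)) (k : Fin n) :
    (univ.filter fun u : Fin n => (π u : ℕ) < (k : ℕ)).card = (k : ℕ) := by
  have h1 : (univ.filter fun u : Fin n => (π u : ℕ) < (k : ℕ))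
      = (univ.filter fun j : Fin n => (j : ℕ) < (k : ℕ)).image π.symm := by
    ext u
    simp only [Finset.mem_image, mem_filter, mem_univ, true_and]
    constructor
    · intro h; exact ⟨π u, h, by simp⟩
    · rintro ⟨j, hj, rfl⟩; simpa using hj
  have h2 : (univ.filter fun j : Fin n => (j : ℕ) < (k : ℕ)) = Finset.Iio k := by
    ext j; simp only [mem_filter, mem_univ, true_and, Finset.mem_Iio, Fin.lt_def]
  rw [h1, Finset.card_image_of_injective _ π.symm.injective, h2, Fin.card_Iio]

/-- Fiberwise sum over tails. -/
lemma sum_tail {n : ℕ} (E : Finset (Fin n × Fin n)) (X : Finset (Fin n))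
    (h : ∀ e ∈ E, e.1 ∈ X) (g : Fin n → ℤ) :
    ∑ e ∈ E, g e.1 = ∑ v ∈ X, (outdeg E v : ℤ) * g v := by
  rw [← Finset.sum_fiberwise_of_maps_to h (fun e => g e.1)]
  refine Finset.sum_congr rfl fun v hv => ?_
  rw [Finset.sum_congr rfl (fun e he => by rw [(Finset.mem_filter.1 he).2]),
    Finset.sum_const, outdeg, nsmul_eq_mul]

/-- Fiberwise sum over heads. -/
lemma sum_head {n : ℕ} (E : Finset (Fin n × Fin n)) (Y : Finset (Fin n))
    (h : ∀ e ∈ E, e.2 ∈ Y) (g : Fin n → ℤ) :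
    ∑ e ∈ E, g e.2 = ∑ v ∈ Y, (indeg E v : ℤ) * g v := by
  rw [← Finset.sum_fiberwise_of_maps_to h (fun e => g e.2)]
  refine Finset.sum_congr rfl fun v hv => ?_
  rw [Finset.sum_congr rfl (fun e he => by rw [(Finset.mem_filter.1 he).2]),
    Finset.sum_const, indeg, nsmul_eq_mul]

lemma gauss_int (q : ℕ) : 2 * ∑ j ∈ range q, (j : ℤ) = q * (q - 1) := by
  induction q with
  | zero => simp
  | succ q ih => rw [Finset.sum_range_succ, mul_add, ih]; push_cast; ring

/-- if all edges go from X to Y and π lists X by non-increasing out-degree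
followed by Y by non-decreasing in-degree, then val(π) ≥ (n/2)·|E|. -/
theorem stmt11 (n : ℕ) (E : Finset (Fin n × Fin n)) (hs : ∀ e ∈ E, e.1 ≠ e.2)
    (X : Finset (Fin n)) (hbip : ∀ e ∈ E, e.1 ∈ X ∧ e.2 ∉ X)
    (π : Equiv.Perm (Fin n))
    (horder : ∀ v ∈ X, ∀ u ∉ X, (π v : ℕ) < (π u : ℕ))
    (hX : ∀ u v : Fin n, u ∈ X → v ∈ X → (π u : ℕ) ≤ (π v : ℕ) → outdeg E v ≤ outdeg E u)
    (hY : ∀ u v : Fin n, u ∉ X → v ∉ X → (π u : ℕ) ≤ (π v : ℕ) → indeg E u ≤ indeg E v) :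
    n * E.card ≤ 2 * valN E π := by
  classical
  rcases E.eq_empty_or_nonempty with rfl | ⟨e0, he0⟩
  · simp [valN]
  set m := X.card with hm
  have hmn : m ≤ n := by
    have := Finset.card_le_card (Finset.subset_univ X)
    simpa using this
  set p := n - m with hp
  -- position facts
  have hXpos : ∀ v ∈ X, (π v : ℕ) < m := by
    intro v hv
    by_contra hno
    push_neg at hno
    have hsub : (univ.filter fun u : Fin n => (π u : ℕ) ≤ (π v : ℕ)) ⊆ X := by
      intro u hu
      simp only [mem_filter, mem_univ, true_and] at hu
      by_contra huX
      exact absurd hu (not_le.mpr (horder v hv u huX))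
    have := Finset.card_le_card hsub
    rw [card_pos_le π (π v)] at this
    omega
  have hYpos : ∀ u, u ∉ X → m ≤ (π u : ℕ) := by
    intro u hu
    have hsub : X ⊆ (univ.filter fun w : Fin n => (π w : ℕ) < (π u : ℕ)) := by
      intro w hw
      simp only [mem_filter, mem_univ, true_and]
      exact horder w hw u hu
    have := Finset.card_le_card hsub
    rwa [card_pos_lt π (π u)] at this
  have hedge : ∀ e ∈ E, (π e.1 : ℕ) < (π e.2 : ℕ) := fun e he =>
    horder _ (hbip e he).1 _ (hbip e he).2
  -- cardinalities positive
  have hm0 : 0 < m := Finset.card_pos.2 ⟨e0.1, (hbip e0 he0).1⟩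
  have hYc : Xᶜ.card = p := by
    rw [Finset.card_compl, Fintype.card_fin]
  have hp0 : 0 < p := by
    rw [← hYc]
    exact Finset.card_pos.2 ⟨e0.2, Finset.mem_compl.2 (hbip e0 he0).2⟩
  -- injectivity of positions
  have hinj : Function.Injective (fun v : Fin n => (π v : ℕ)) := fun a b h =>
    π.injective (Fin.val_injective h)
  -- images of parts under positions
  have hXimg : X.image (fun v => (π v : ℕ)) = range m := by
    apply Finset.eq_of_subset_of_card_le
    · intro j hj
      rcases Finset.mem_image.1 hj with ⟨v, hv, rfl⟩
      exact Finset.mem_range.2 (hXpos v hv)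
    · rw [Finset.card_range, Finset.card_image_of_injective _ hinj]
  have hYimg : Xᶜ.image (fun v => (π v : ℕ)) = Finset.Ico m n := by
    apply Finset.eq_of_subset_of_card_le
    · intro j hj
      rcases Finset.mem_image.1 hj with ⟨v, hv, rfl⟩
      exact Finset.mem_Ico.2 ⟨hYpos v (Finset.mem_compl.1 hv), (π v).isLt⟩
    · rw [Nat.card_Ico, Finset.card_image_of_injective _ hinj, hYc]
  -- total degree sums
  have htotX : ∑ v ∈ X, (outdeg E v : ℤ) = E.card := by
    have h := sum_tail E X (fun e he => (hbip e he).1) (fun _ => 1)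
    simpa using h.symm
  have htotY : ∑ v ∈ Xᶜ, (indeg E v : ℤ) = E.card := by
    have h := sum_head E Xᶜ (fun e he => Finset.mem_compl.2 (hbip e he).2) (fun _ => 1)
    simpa using h.symm
  -- weight sums
  have hsumgX : 2 * ∑ v ∈ X, ((m : ℤ) - 1 - ((π v : ℕ) : ℤ)) = m * (m - 1) := by
    have h1 : ∑ v ∈ X, ((m : ℤ) - 1 - ((π v : ℕ) : ℤ))
        = ∑ j ∈ range m, ((m : ℤ) - 1 - (j : ℤ)) := by
      rw [← hXimg, Finset.sum_image (fun a _ b _ h => hinj h)]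
    have h2 : ∑ j ∈ range m, ((m : ℤ) - 1 - (j : ℤ))
        = m * ((m : ℤ) - 1) - ∑ j ∈ range m, (j : ℤ) := by
      rw [Finset.sum_sub_distrib, Finset.sum_const, Finset.card_range, nsmul_eq_mul]
    have h3 := gauss_int m
    rw [h1, h2]
    linarith
  have hsumgY : 2 * ∑ v ∈ Xᶜ, (((π v : ℕ) : ℤ) - (m : ℤ)) = p * (p - 1) := by
    have h1 : ∑ v ∈ Xᶜ, (((π v : ℕ) : ℤ) - (m : ℤ))
        = ∑ j ∈ Finset.Ico m n, ((j : ℤ) - (m : ℤ)) := by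
      rw [← hYimg, Finset.sum_image (fun a _ b _ h => hinj h)]
    have h2 : ∑ j ∈ Finset.Ico m n, ((j : ℤ) - (m : ℤ)) = ∑ i ∈ range p, (i : ℤ) := by
      rw [Finset.sum_Ico_eq_sum_range]
      exact Finset.sum_congr rfl fun i _ => by push_cast; ring
    have h3 := gauss_int p
    rw [h1, h2]
    linarith
  -- Chebyshev on X
  have hmono1 : MonovaryOn (fun v => (outdeg E v : ℤ))
      (fun v => (m : ℤ) - 1 - ((π v : ℕ) : ℤ)) ↑X := by
    intro i hi j hj hlt
    dsimp only at hlt ⊢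
    have hij : (π j : ℕ) ≤ (π i : ℕ) := by omega
    exact_mod_cast hX j i (Finset.mem_coe.1 hj) (Finset.mem_coe.1 hi) hij
  have cheb1 := hmono1.sum_mul_sum_le_card_mul_sum
  rw [htotX, ← hm] at cheb1
  set S1 := ∑ v ∈ X, (outdeg E v : ℤ) * ((m : ℤ) - 1 - ((π v : ℕ) : ℤ)) with hS1
  -- Chebyshev on Y
  have hmono2 : MonovaryOn (fun v => (indeg E v : ℤ))
      (fun v => ((π v : ℕ) : ℤ) - (m : ℤ)) ↑(Xᶜ) := by
    intro i hi j hj hlt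
    dsimp only at hlt ⊢
    have hij : (π i : ℕ) ≤ (π j : ℕ) := by omega
    exact_mod_cast hY i j (Finset.mem_compl.1 (Finset.mem_coe.1 hi))
      (Finset.mem_compl.1 (Finset.mem_coe.1 hj)) hij
  have cheb2 := hmono2.sum_mul_sum_le_card_mul_sum
  rw [htotY, hYc] at cheb2
  set S2 := ∑ v ∈ Xᶜ, (indeg E v : ℤ) * (((π v : ℕ) : ℤ) - (m : ℤ)) with hS2
  -- from Chebyshev derive the two key bounds
  have hb1 : (E.card : ℤ) * ((m : ℤ) - 1) ≤ 2 * S1 := by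
    have hmpos : (0 : ℤ) < m := by exact_mod_cast hm0
    have h : (m : ℤ) * ((E.card : ℤ) * ((m : ℤ) - 1)) ≤ (m : ℤ) * (2 * S1) := by
      nlinarith [cheb1, hsumgX]
    exact le_of_mul_le_mul_left h hmpos
  have hb2 : (E.card : ℤ) * ((p : ℤ) - 1) ≤ 2 * S2 := by
    have hppos : (0 : ℤ) < p := by exact_mod_cast hp0
    have h : (p : ℤ) * ((E.card : ℤ) * ((p : ℤ) - 1)) ≤ (p : ℤ) * (2 * S2) := by
      nlinarith [cheb2, hsumgY]
    exact le_of_mul_le_mul_left h hppos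
  -- decompose the value
  have hval : (valN E π : ℤ) = S2 + S1 + E.card := by
    have h0 : (valN E π : ℤ) = ∑ e ∈ E, (((π e.2 : ℕ) : ℤ) - ((π e.1 : ℕ) : ℤ)) := by
      rw [valN, Nat.cast_sum]
      exact Finset.sum_congr rfl fun e he => by
        rw [Nat.cast_sub (le_of_lt (hedge e he))]
    have h1 : ∑ e ∈ E, (((π e.2 : ℕ) : ℤ) - ((π e.1 : ℕ) : ℤ))
        = (∑ e ∈ E, (((π e.2 : ℕ) : ℤ) - (m : ℤ)))
          + (∑ e ∈ E, ((m : ℤ) - 1 - ((π e.1 : ℕ) : ℤ))) + ∑ e ∈ E, (1 : ℤ) := by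
      rw [← Finset.sum_add_distrib, ← Finset.sum_add_distrib]
      exact Finset.sum_congr rfl fun e _ => by ring
    rw [h0, h1,
      sum_head E Xᶜ (fun e he => Finset.mem_compl.2 (hbip e he).2)
        (fun v => ((π v : ℕ) : ℤ) - (m : ℤ)),
      sum_tail E X (fun e he => (hbip e he).1)
        (fun v => (m : ℤ) - 1 - ((π v : ℕ) : ℤ)),
      Finset.sum_const, ← hS1, ← hS2, nsmul_eq_mul, mul_one]
  -- conclude
  have hnp : (n : ℤ) = (m : ℤ) + (p : ℤ) := by
    have : m + p = n := by omega
    exact_mod_cast this.symm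
  have hfin : (n : ℤ) * (E.card : ℤ) ≤ 2 * (valN E π : ℤ) := by
    rw [hval, hnp]
    linarith
  exact_mod_cast hfin
end

section
/- Every maximum arrangement of a transitive acyclic digraph D is a topological sort of D (no edge of D points backwards in the arrangement). -/
open Finset

/-- every maximum arrangement of a transitive acyclic digraph is a
topological sort (no backward edges). -/
theorem stmt12 (n : ℕ) (E : Finset (Fin n × Fin n)) (hs : ∀ e ∈ E, e.1 ≠ e.2)
    (htrans : ∀ u v w : Fin n, (u, v) ∈ E → (v, w) ∈ E → (u, w) ∈ E)
    (hanti : ∀ u v : Fin n, (u, v) ∈ E → (v, u) ∉ E)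
    (π : Equiv.Perm (Fin n)) (hmax : ∀ σ : Equiv.Perm (Fin n), valN E σ ≤ valN E π) :
    ∀ e ∈ E, (π e.1 : ℕ) < (π e.2 : ℕ) := by
  have hcast : ∀ σ : Equiv.Perm (Fin n), (valN E σ : ℤ) = arrVal E σ := by
    intro σ
    rw [valN, arrVal, Nat.cast_sum]
    refine Finset.sum_congr rfl fun e _ => ?_
    simp only [edgeVal]
    omega
  have hmaxZ : ∀ σ : Equiv.Perm (Fin n), arrVal E σ ≤ arrVal E π := by
    intro σ; rw [← hcast, ← hcast]; exact_mod_cast hmax σ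
  rintro ⟨u, v⟩ he
  by_contra hlt
  push_neg at hlt
  simp only at hlt ⊢
  have huv : u ≠ v := hs _ he
  have hπne : (π u : ℕ) ≠ (π v : ℕ) := by
    intro h
    exact huv (π.injective (Fin.val_injective h))
  have hab : (π v : ℕ) < (π u : ℕ) := lt_of_le_of_ne hlt (Ne.symm hπne)
  have habZ : (π v : ℤ) < (π u : ℤ) := by exact_mod_cast hab
  set σ : Equiv.Perm (Fin n) := π * Equiv.swap u v with hσdef
  have hσu : σ u = π v := by
    simp [hσdef, Equiv.Perm.mul_apply]
  have hσv : σ v = π u := by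
    simp [hσdef, Equiv.Perm.mul_apply]
  have hσw : ∀ w : Fin n, w ≠ u → w ≠ v → σ w = π w := by
    intro w h1 h2
    simp [hσdef, Equiv.Perm.mul_apply, Equiv.swap_apply_of_ne_of_ne h1 h2]
  set δ : Fin n × Fin n → ℤ := fun e => edgeVal σ e - edgeVal π e with hδdef
  set L : Finset (Fin n × Fin n) := E.filter (fun e => e.2 = u ∨ e.1 = v) with hLdef
  set fmap : Fin n × Fin n → Fin n × Fin n :=
    fun e => if e.2 = u then (e.1, v) else (u, e.2) with hfdef
  -- facts about members of L
  have hLprops : ∀ e ∈ L, fmap e ∈ E ∧ ((fmap e).2 ≠ u ∧ (fmap e).1 ≠ v) ∧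
      δ (fmap e) = - δ e := by
    intro e heL
    rw [hLdef, Finset.mem_filter] at heL
    obtain ⟨heE, heP⟩ := heL
    obtain ⟨w, z⟩ := e
    by_cases hcase : z = u
    · -- e = (w, z) with z = u, fmap e = (w, v)
      have heE' : (w, u) ∈ E := by rw [← hcase]; exact heE
      have hwu : w ≠ u := hs _ heE'
      have hwv : w ≠ v := by
        intro h; rw [h] at heE'; exact hanti u v he heE'
      have hf : fmap (w, z) = (w, v) := by simp [hfdef, hcase]
      rw [hf]
      have hσz : σ z = π v := by rw [hcase]; exact hσu
      have hπz : ((π z : ℤ)) = ((π u : ℤ)) := by rw [hcase]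
      refine ⟨htrans w u v heE' he, ⟨Ne.symm huv, hwv⟩, ?_⟩
      simp only [hδdef, edgeVal, hσv, hσz, hσw w hwu hwv, hπz]
      omega
    · have hwv' : w = v := by
        rcases heP with h | h
        · exact absurd h hcase
        · exact h
      -- e = (w, z) with w = v, fmap e = (u, z)
      have heE' : (v, z) ∈ E := by rw [← hwv']; exact heE
      have hzv : z ≠ v := Ne.symm (hs _ heE')
      have hf : fmap (w, z) = (u, z) := by simp [hfdef, hcase]
      rw [hf]
      have hσw' : σ w = π u := by rw [hwv']; exact hσv
      have hπw : ((π w : ℤ)) = ((π v : ℤ)) := by rw [hwv']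
      refine ⟨htrans u v z he heE', ⟨hcase, huv⟩, ?_⟩
      simp only [hδdef, edgeVal, hσu, hσw', hσw z hcase hzv, hπw]
      omega
  -- nonnegativity of δ outside L
  have hδpos : ∀ e ∈ E.filter (fun e => ¬ (e.2 = u ∨ e.1 = v)), 0 ≤ δ e := by
    intro e heF
    rw [Finset.mem_filter] at heF
    obtain ⟨heE, heP⟩ := heF
    obtain ⟨w, z⟩ := e
    push_neg at heP
    obtain ⟨hzu, hwv⟩ := heP
    by_cases h1 : w = u
    · subst h1
      by_cases h2 : z = v
      · subst h2
        simp only [hδdef, edgeVal, hσu, hσv]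
        omega
      · simp only [hδdef, edgeVal, hσu, hσw z hzu h2]
        omega
    · by_cases h2 : z = v
      · subst h2
        simp only [hδdef, edgeVal, hσv, hσw w h1 hwv]
        omega
      · simp only [hδdef, edgeVal, hσw w h1 hwv, hσw z hzu h2]
        omega
  -- injectivity of fmap on L
  have hinj : ∀ x ∈ L, ∀ y ∈ L, fmap x = fmap y → x = y := by
    intro x hxL y hyL hxy
    rw [hLdef, Finset.mem_filter] at hxL hyL
    obtain ⟨hxE, hxP⟩ := hxL
    obtain ⟨hyE, hyP⟩ := hyL
    obtain ⟨w1, z1⟩ := x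
    obtain ⟨w2, z2⟩ := y
    by_cases c1 : z1 = u <;> by_cases c2 : z2 = u
    · simp only [hfdef, c1, c2, if_true, Prod.mk.injEq] at hxy
      simp [c1, c2, hxy.1]
    · simp [hfdef, c1, c2, Prod.mk.injEq] at hxy
      exact absurd (hxy.1.trans c1.symm) (hs _ hxE)
    · simp [hfdef, c1, c2, Prod.mk.injEq] at hxy
      exact absurd (hxy.1.symm.trans c2.symm) (hs _ hyE)
    · simp [hfdef, c1, c2, Prod.mk.injEq] at hxy
      have hw1 : w1 = v := by
        rcases hxP with h | h
        · exact absurd h c1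
        · exact h
      have hw2 : w2 = v := by
        rcases hyP with h | h
        · exact absurd h c2
        · exact h
      simp [hw1, hw2, hxy]
  -- (u,v) facts
  have huvF : (u, v) ∈ E.filter (fun e => ¬ (e.2 = u ∨ e.1 = v)) := by
    rw [Finset.mem_filter]
    refine ⟨he, ?_⟩
    rintro (h | h)
    · exact huv h.symm
    · exact huv h
  have huvimg : (u, v) ∉ L.image fmap := by
    rw [Finset.mem_image]
    rintro ⟨e, heL, hfe⟩
    rw [hLdef, Finset.mem_filter] at heL
    obtain ⟨heE, heP⟩ := heL
    obtain ⟨w, z⟩ := e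
    by_cases hcase : z = u
    · simp only [hfdef, hcase, if_true, Prod.mk.injEq] at hfe
      exact hs _ heE (hfe.1.trans hcase.symm)
    · simp [hfdef, hcase, Prod.mk.injEq] at hfe
      have hw : w = v := by
        rcases heP with h | h
        · exact absurd h hcase
        · exact h
      exact hs _ heE (hw.trans hfe.symm)
  have himgsub : L.image fmap ⊆ E.filter (fun e => ¬ (e.2 = u ∨ e.1 = v)) := by
    intro x hx
    rw [Finset.mem_image] at hx
    obtain ⟨e, heL, hfe⟩ := hx
    obtain ⟨h1, ⟨h2a, h2b⟩, _⟩ := hLprops e heL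
    rw [Finset.mem_filter]
    subst hfe
    exact ⟨h1, by rintro (h | h); exact h2a h; exact h2b h⟩
  -- sum computations
  have hsplit : ∑ e ∈ E, δ e
      = ∑ e ∈ L, δ e + ∑ e ∈ E.filter (fun e => ¬ (e.2 = u ∨ e.1 = v)), δ e := by
    rw [hLdef]
    exact (Finset.sum_filter_add_sum_filter_not E _ δ).symm
  have hδuv : δ (u, v) = (π u : ℤ) - (π v : ℤ) := by
    simp only [hδdef, edgeVal, hσu, hσv]
    omega
  have hsub : insert (u, v) (L.image fmap)
      ⊆ E.filter (fun e => ¬ (e.2 = u ∨ e.1 = v)) := by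
    intro x hx
    rw [Finset.mem_insert] at hx
    rcases hx with h | h
    · subst h; exact huvF
    · exact himgsub h
  have hge : ∑ e ∈ E.filter (fun e => ¬ (e.2 = u ∨ e.1 = v)), δ e
      ≥ ∑ e ∈ insert (u, v) (L.image fmap), δ e :=
    Finset.sum_le_sum_of_subset_of_nonneg hsub (fun i hi _ => hδpos i hi)
  have himgsum : ∑ e ∈ L.image fmap, δ e = - ∑ e ∈ L, δ e := by
    rw [Finset.sum_image hinj, ← Finset.sum_neg_distrib]
    exact Finset.sum_congr rfl fun e heL => (hLprops e heL).2.2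
  have hins : ∑ e ∈ insert (u, v) (L.image fmap), δ e
      = ((π u : ℤ) - (π v : ℤ)) + (- ∑ e ∈ L, δ e) := by
    rw [Finset.sum_insert huvimg, hδuv, himgsum]
  have htotal : arrVal E σ - arrVal E π ≥ (π u : ℤ) - (π v : ℤ) := by
    have h1 : arrVal E σ - arrVal E π = ∑ e ∈ E, δ e := by
      rw [arrVal, arrVal, ← Finset.sum_sub_distrib]
    rw [h1, hsplit]
    have h2 := hge
    rw [hins] at h2
    linarith
  have := hmaxZ σ
  linarith
end

section
/- Let D be a transitive acyclic digraph and let π be an arrangement of V(D) in non-increasing order of d⁺(v) − d⁻(v). Then π is a maximum arrangement: its signature coordinatewise dominates the signature of every other arrangement; in particular, for every k, the cut of π after position k has the maximum size among all directed cuts E(X,Y) of D with |X| = k. -/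
/-!
Write `f v = d⁺ v - d⁻ v`. Counting edge ends, every vertex set `X` satisfies
`|E(X, Xᶜ)| - |E(Xᶜ, X)| = ∑ v ∈ X, f v`. In a transitive acyclic digraph a backward edge
`(w, v)` with `w ∉ X`, `v ∈ X` can be removed by exchanging `w` and `v`, which strictly enlarges
the forward cut; so a maximum directed cut with `|X| = k` has no backward edge and has size
`∑ v ∈ X, f v`. That sum is at most the sum of `f` over the first `k` vertices of `π`, which in
turn is at most the `k`-th cut of `π`.
-/

open Finset

theorem Finset.sum_le_sum_of_card_eq_of_forall_le {α M : Type*} [DecidableEq α]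
    [AddCommMonoid M] [LinearOrder M] [IsOrderedAddMonoid M] {g : α → M} {X T : Finset α}
    (hcard : X.card = T.card) (hT : ∀ a ∈ T, ∀ b ∉ T, g b ≤ g a) :
    ∑ v ∈ X, g v ≤ ∑ v ∈ T, g v := by
  have hcard' := card_sdiff_comm hcard
  rw [← sum_inter_add_sum_sdiff X T, ← sum_inter_add_sum_sdiff T X, inter_comm]
  refine add_le_add_right ?_ _
  rcases (T \ X).eq_empty_or_nonempty with hTX | hTX
  · rw [hTX, card_empty, card_eq_zero] at hcard'
    simp [hcard', hTX]
  obtain ⟨b, hb, hbmin⟩ := exists_min_image (T \ X) g hTX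
  calc ∑ v ∈ X \ T, g v ≤ (X \ T).card • g b :=
        sum_le_card_nsmul _ _ _ fun a ha => hT b (mem_sdiff.1 hb).1 a (mem_sdiff.1 ha).2
    _ = (T \ X).card • g b := by rw [hcard']
    _ ≤ ∑ v ∈ T \ X, g v := card_nsmul_le_sum _ _ _ hbmin

def initSeg {n : ℕ} (σ : Equiv.Perm (Fin n)) (k : ℕ) : Finset (Fin n) :=
  univ.filter fun v => (σ v : ℕ) < k

lemma card_initSeg {n : ℕ} (σ : Equiv.Perm (Fin n)) (k : ℕ) :
    (initSeg σ k).card = min n k := by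
  rw [initSeg, card_equiv σ (t := univ.filter fun i : Fin n => (i : ℕ) < k) (by simp),
    Fin.card_filter_val_lt]

lemma cutAt_eq_dicut_initSeg {n : ℕ} (E : Finset (Fin n × Fin n)) (σ : Equiv.Perm (Fin n))
    (k : ℕ) : cutAt E σ k = dicut E (initSeg σ k) := by
  simp [cutAt, dicut, initSeg]

lemma sum_outdeg {n : ℕ} (E : Finset (Fin n × Fin n)) (X : Finset (Fin n)) :
    ∑ v ∈ X, outdeg E v = (E.filter fun e => e.1 ∈ X).card :=
  sum_card_fiberwise_eq_card_filter E X Prod.fst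

lemma sum_indeg {n : ℕ} (E : Finset (Fin n × Fin n)) (X : Finset (Fin n)) :
    ∑ v ∈ X, indeg E v = (E.filter fun e => e.2 ∈ X).card :=
  sum_card_fiberwise_eq_card_filter E X Prod.snd

lemma dicut_sub_dicut_compl {n : ℕ} (E : Finset (Fin n × Fin n)) (X : Finset (Fin n)) :
    (dicut E X : ℤ) - dicut E Xᶜ = ∑ v ∈ X, ((outdeg E v : ℤ) - indeg E v) := by
  have hout :
      #(E.filter fun e => e.1 ∈ X ∧ e.2 ∈ X) + dicut E X = ∑ v ∈ X, outdeg E v := by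
    rw [sum_outdeg, ← card_filter_add_card_filter_not (s := E.filter (·.1 ∈ X)) (·.2 ∈ X),
      filter_filter, filter_filter, dicut]
  have hin :
      #(E.filter fun e => e.1 ∈ X ∧ e.2 ∈ X) + dicut E Xᶜ = ∑ v ∈ X, indeg E v := by
    rw [sum_indeg, ← card_filter_add_card_filter_not (s := E.filter (·.2 ∈ X)) (·.1 ∈ X),
      filter_filter, filter_filter, dicut]
    simp only [mem_compl, not_not, and_comm]
  rw [sum_sub_distrib, ← Nat.cast_sum, ← Nat.cast_sum, ← hout, ← hin]
  push_cast
  ring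

lemma swap_mem_of_mem {n : ℕ} {E : Finset (Fin n × Fin n)}
    (htrans : ∀ u v w : Fin n, (u, v) ∈ E → (v, w) ∈ E → (u, w) ∈ E)
    (hanti : ∀ u v : Fin n, (u, v) ∈ E → (v, u) ∉ E) {w v x y : Fin n} (hwv : (w, v) ∈ E)
    (hxy : (x, y) ∈ E) (hx : x ≠ w) (hy : y ≠ v) :
    (Equiv.swap w v x, Equiv.swap w v y) ∈ E := by
  by_cases hxv : x = v <;> by_cases hyw : y = w
  · subst hxv hyw; exact absurd hxy (hanti _ _ hwv)
  · subst hxv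
    rw [Equiv.swap_apply_right, Equiv.swap_apply_of_ne_of_ne hyw hy]
    exact htrans _ _ _ hwv hxy
  · subst hyw
    rw [Equiv.swap_apply_of_ne_of_ne hx hxv, Equiv.swap_apply_left]
    exact htrans _ _ _ hxy hwv
  · rwa [Equiv.swap_apply_of_ne_of_ne hx hxv, Equiv.swap_apply_of_ne_of_ne hyw hy]

lemma dicut_lt_dicut_map_swap {n : ℕ} {E : Finset (Fin n × Fin n)}
    (htrans : ∀ u v w : Fin n, (u, v) ∈ E → (v, w) ∈ E → (u, w) ∈ E)
    (hanti : ∀ u v : Fin n, (u, v) ∈ E → (v, u) ∉ E) {X : Finset (Fin n)} {w v : Fin n}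
    (hwv : (w, v) ∈ E) (hw : w ∉ X) (hv : v ∈ X) :
    dicut E X < dicut E (X.map (Equiv.swap w v).toEmbedding) := by
  set τ := Equiv.swap w v
  -- Relabelling by `τ` maps the cut of `X` injectively into the cut of `τ X`, missing `(w, v)`.
  have hmem : ∀ x, τ x ∈ X.map τ.toEmbedding ↔ x ∈ X := by simp [τ]
  have hsub : (E.filter fun e => e.1 ∈ X ∧ e.2 ∉ X).map (τ.prodCongr τ).toEmbedding ⊆
      E.filter fun e => e.1 ∈ X.map τ.toEmbedding ∧ e.2 ∉ X.map τ.toEmbedding := by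
    intro e he
    obtain ⟨⟨x, y⟩, hxy, rfl⟩ := mem_map.1 he
    simp only [mem_filter] at hxy
    simp only [Equiv.coe_toEmbedding, Equiv.prodCongr_apply, Prod.map, mem_filter, hmem]
    refine ⟨swap_mem_of_mem htrans hanti hwv hxy.1 ?_ ?_, hxy.2⟩
    · rintro rfl; exact hw hxy.2.1
    · rintro rfl; exact hxy.2.2 hv
  have hnew :
      (w, v) ∉ (E.filter fun e => e.1 ∈ X ∧ e.2 ∉ X).map (τ.prodCongr τ).toEmbedding := by
    simp only [τ, mem_map_equiv, Equiv.prodCongr_symm, Equiv.symm_swap, Equiv.prodCongr_apply,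
      Prod.map, Equiv.swap_apply_left, Equiv.swap_apply_right, mem_filter]
    exact fun h => absurd h.1 (hanti _ _ hwv)
  have hwv' :
      (w, v) ∈ E.filter fun e => e.1 ∈ X.map τ.toEmbedding ∧ e.2 ∉ X.map τ.toEmbedding := by
    refine mem_filter.2 ⟨hwv, ?_, ?_⟩
    · rw [← Equiv.swap_apply_right w v, hmem]; exact hv
    · rw [← Equiv.swap_apply_left w v, hmem]; exact hw
  rw [dicut, dicut, ← card_map (τ.prodCongr τ).toEmbedding]
  exact card_lt_card ((ssubset_iff_of_subset hsub).2 ⟨_, hwv', hnew⟩)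

lemma cutAt_eq_zero_of_le {n : ℕ} (E : Finset (Fin n × Fin n)) (σ : Equiv.Perm (Fin n))
    {k : ℕ} (hk : n ≤ k) : cutAt E σ k = 0 := by
  rw [cutAt, card_eq_zero, filter_eq_empty_iff]
  exact fun e _ he => (σ e.2).isLt.not_ge (hk.trans he.2)

lemma dicut_compl_eq_zero_of_forall_le {n : ℕ} {E : Finset (Fin n × Fin n)}
    (htrans : ∀ u v w : Fin n, (u, v) ∈ E → (v, w) ∈ E → (u, w) ∈ E)
    (hanti : ∀ u v : Fin n, (u, v) ∈ E → (v, u) ∉ E) {Y : Finset (Fin n)}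
    (hY : ∀ Z : Finset (Fin n), Z.card = Y.card → dicut E Z ≤ dicut E Y) :
    dicut E Yᶜ = 0 := by
  rw [dicut, card_eq_zero, filter_eq_empty_iff]
  rintro ⟨w, v⟩ hwv ⟨hw, hv⟩
  rw [mem_compl] at hw
  rw [mem_compl, not_not] at hv
  exact (hY _ (card_map _)).not_gt (dicut_lt_dicut_map_swap htrans hanti hwv hw hv)

lemma dicut_le_dicut_initSeg_of_compl_eq_zero {n : ℕ} {E : Finset (Fin n × Fin n)}
    {π : Equiv.Perm (Fin n)}
    (hsort : ∀ u v : Fin n, (π u : ℕ) ≤ (π v : ℕ) →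
      (outdeg E v : ℤ) - (indeg E v : ℤ) ≤ (outdeg E u : ℤ) - (indeg E u : ℤ))
    {Y : Finset (Fin n)} (hY : dicut E Yᶜ = 0) :
    dicut E Y ≤ dicut E (initSeg π Y.card) := by
  set T := initSeg π Y.card
  have hT : Y.card = T.card := by
    rw [card_initSeg, min_eq_right (by simpa using card_le_univ Y)]
  have hsum := sum_le_sum_of_card_eq_of_forall_le
    (g := fun v => (outdeg E v : ℤ) - indeg E v) hT fun a ha b hb => by
      simp only [T, initSeg, mem_filter, mem_univ, true_and] at ha hb
      exact hsort a b (by omega)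
  suffices (dicut E Y : ℤ) ≤ dicut E T by exact_mod_cast this
  calc (dicut E Y : ℤ) = ∑ v ∈ Y, ((outdeg E v : ℤ) - indeg E v) := by
        simpa [hY] using dicut_sub_dicut_compl E Y
    _ ≤ ∑ v ∈ T, ((outdeg E v : ℤ) - indeg E v) := hsum
    _ = dicut E T - dicut E Tᶜ := (dicut_sub_dicut_compl E T).symm
    _ ≤ dicut E T := sub_le_self _ (Nat.cast_nonneg _)

lemma dicut_le_cutAt_card {n : ℕ} {E : Finset (Fin n × Fin n)}
    (htrans : ∀ u v w : Fin n, (u, v) ∈ E → (v, w) ∈ E → (u, w) ∈ E)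
    (hanti : ∀ u v : Fin n, (u, v) ∈ E → (v, u) ∉ E) {π : Equiv.Perm (Fin n)}
    (hsort : ∀ u v : Fin n, (π u : ℕ) ≤ (π v : ℕ) →
      (outdeg E v : ℤ) - (indeg E v : ℤ) ≤ (outdeg E u : ℤ) - (indeg E u : ℤ))
    (X : Finset (Fin n)) : dicut E X ≤ cutAt E π X.card := by
  obtain ⟨Y, hY, hYmax⟩ := exists_max_image (powersetCard X.card univ) (dicut E)
    ⟨X, mem_powersetCard.2 ⟨subset_univ X, rfl⟩⟩
  have hYcard := (mem_powersetCard.1 hY).2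
  have hYcompl : dicut E Yᶜ = 0 := dicut_compl_eq_zero_of_forall_le htrans hanti fun Z hZ =>
    hYmax Z (mem_powersetCard.2 ⟨subset_univ Z, hZ.trans hYcard⟩)
  calc dicut E X ≤ dicut E Y := hYmax X (mem_powersetCard.2 ⟨subset_univ X, rfl⟩)
    _ ≤ dicut E (initSeg π Y.card) := dicut_le_dicut_initSeg_of_compl_eq_zero hsort hYcompl
    _ = cutAt E π X.card := by rw [hYcard, cutAt_eq_dicut_initSeg]

theorem stmt13_general (n : ℕ) (E : Finset (Fin n × Fin n))
    (htrans : ∀ u v w : Fin n, (u, v) ∈ E → (v, w) ∈ E → (u, w) ∈ E)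
    (hanti : ∀ u v : Fin n, (u, v) ∈ E → (v, u) ∉ E)
    (π : Equiv.Perm (Fin n))
    (hsort : ∀ u v : Fin n, (π u : ℕ) ≤ (π v : ℕ) →
      (outdeg E v : ℤ) - (indeg E v : ℤ) ≤ (outdeg E u : ℤ) - (indeg E u : ℤ)) :
    (∀ (σ : Equiv.Perm (Fin n)) (k : ℕ), cutAt E σ k ≤ cutAt E π k) ∧
    (∀ X : Finset (Fin n), dicut E X ≤ cutAt E π X.card) := by
  refine ⟨fun σ k => ?_, dicut_le_cutAt_card htrans hanti hsort⟩
  rcases le_total k n with hk | hk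
  · calc cutAt E σ k = dicut E (initSeg σ k) := cutAt_eq_dicut_initSeg E σ k
      _ ≤ cutAt E π (initSeg σ k).card := dicut_le_cutAt_card htrans hanti hsort _
      _ = cutAt E π k := by rw [card_initSeg, min_eq_right hk]
  · rw [cutAt_eq_zero_of_le E σ hk]
    exact Nat.zero_le _

/-- arranging a transitive acyclic digraph by non-increasing
d⁺(v) − d⁻(v) gives an arrangement whose signature coordinatewise dominates every
other signature, and each of its cuts is a maximum directed cut for its cardinality. -/
theorem stmt13 (n : ℕ) (E : Finset (Fin n × Fin n)) (hs : ∀ e ∈ E, e.1 ≠ e.2)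
    (htrans : ∀ u v w : Fin n, (u, v) ∈ E → (v, w) ∈ E → (u, w) ∈ E)
    (hanti : ∀ u v : Fin n, (u, v) ∈ E → (v, u) ∉ E)
    (π : Equiv.Perm (Fin n))
    (hsort : ∀ u v : Fin n, (π u : ℕ) ≤ (π v : ℕ) →
      (outdeg E v : ℤ) - (indeg E v : ℤ) ≤ (outdeg E u : ℤ) - (indeg E u : ℤ)) :
    (∀ (σ : Equiv.Perm (Fin n)) (k : ℕ), cutAt E σ k ≤ cutAt E π k) ∧
    (∀ X : Finset (Fin n), dicut E X ≤ cutAt E π X.card) :=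
  stmt13_general n E htrans hanti π hsort
end

section
/- If D is a disconnected digraph and H is one of the connected components of its underlying graph, then any maximum arrangement π of D restricts (preserving relative order) to a maximum arrangement of H. -/
open Finset

private lemma card_filter_split {α : Type*} [DecidableEq α] (s : Finset α)
    (q p : α → Prop) [DecidablePred p] [DecidablePred q] :
    (s.filter q).card =
      (s.filter (fun a => q a ∧ p a)).card + (s.filter (fun a => q a ∧ ¬ p a)).card := by
  rw [← Finset.filter_filter, ← Finset.filter_filter]
  exact (Finset.card_filter_add_card_filter_not (s := s.filter q) (p := p)).symm

/-- if the underlying graph of D is disconnected and C is the vertex set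
of one of its connected components, then any maximum arrangement π of D (signature
coordinatewise dominating all others) restricts — keeping relative order — to a maximum
arrangement of the component. -/
theorem stmt16 (n : ℕ) (E : Finset (Fin n × Fin n)) (hs : ∀ e ∈ E, e.1 ≠ e.2)
    (G : SimpleGraph (Fin n)) (hG : G = SimpleGraph.fromRel (fun u v => (u, v) ∈ E))
    (hdisc : ¬ G.Connected)
    (C : Finset (Fin n)) (v₀ : Fin n)
    (hC : (C : Set (Fin n)) = (G.connectedComponentMk v₀).supp)
    (π : Equiv.Perm (Fin n))
    (hmax : ∀ (σ : Equiv.Perm (Fin n)) (k : ℕ), cutAt E σ k ≤ cutAt E π k) :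
    ∀ ρ : Fin n → ℕ, Set.InjOn ρ C → (∀ v ∈ C, ρ v < C.card) → ∀ k : ℕ,
      (E.filter (fun e => e.1 ∈ C ∧ e.2 ∈ C ∧ ρ e.1 < k ∧ k ≤ ρ e.2)).card ≤
      (E.filter (fun e => e.1 ∈ C ∧ e.2 ∈ C ∧
        (C.filter (fun u => (π u : ℕ) < (π e.1 : ℕ))).card < k ∧
        k ≤ (C.filter (fun u => (π u : ℕ) < (π e.2 : ℕ))).card)).card := by
  intro ρ hρinj hρlt k
  by_cases hk0 : k = 0
  · have h0 : (E.filter (fun e => e.1 ∈ C ∧ e.2 ∈ C ∧ ρ e.1 < k ∧ k ≤ ρ e.2)) = ∅ := by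
      subst hk0; simp
    rw [h0]; simp
  by_cases hkm : C.card < k
  · have h0 : (E.filter (fun e => e.1 ∈ C ∧ e.2 ∈ C ∧ ρ e.1 < k ∧ k ≤ ρ e.2)) = ∅ := by
      rw [Finset.filter_eq_empty_iff]
      rintro e he ⟨h1, h2, h3, h4⟩
      have := hρlt e.2 h2
      omega
    rw [h0]; simp
  push_neg at hkm
  have hk1 : 1 ≤ k := Nat.one_le_iff_ne_zero.mpr hk0
  -- edges stay within or outside the component
  have hcomp : ∀ e ∈ E, (e.1 ∈ C ↔ e.2 ∈ C) := by
    intro e he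
    have hadj : G.Adj e.1 e.2 := by
      rw [hG, SimpleGraph.fromRel_adj]
      exact ⟨hs e he, Or.inl (by simpa using he)⟩
    have hcc : G.connectedComponentMk e.1 = G.connectedComponentMk e.2 :=
      SimpleGraph.ConnectedComponent.sound hadj.reachable
    have hmem : ∀ v : Fin n, v ∈ C ↔ G.connectedComponentMk v = G.connectedComponentMk v₀ := by
      intro v
      constructor
      · intro hv
        have : v ∈ (C : Set (Fin n)) := hv
        rw [hC] at this
        exact this
      · intro hv
        have : v ∈ (G.connectedComponentMk v₀).supp := hv
        rw [← hC] at this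
        exact this
    rw [hmem, hmem, hcc]
  -- rank of a vertex inside C under π
  set r : Fin n → ℕ := fun v => (C.filter (fun u => (π u : ℕ) < (π v : ℕ))).card with hrdef
  have hrmono : ∀ u ∈ C, ∀ v : Fin n, (π u : ℕ) < (π v : ℕ) → r u < r v := by
    intro u hu v huv
    apply Finset.card_lt_card
    constructor
    · intro w hw
      simp only [Finset.mem_filter] at hw ⊢
      exact ⟨hw.1, hw.2.trans huv⟩
    · intro hsub
      have : u ∈ C.filter (fun w => (π w : ℕ) < (π v : ℕ)) := by
        simp only [Finset.mem_filter]; exact ⟨hu, huv⟩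
      have := hsub this
      simp only [Finset.mem_filter] at this
      omega
  have hπinj : ∀ u v : Fin n, (π u : ℕ) = (π v : ℕ) → u = v := by
    intro u v h
    exact π.injective (Fin.ext h)
  have hriff : ∀ u ∈ C, ∀ v ∈ C, ((π u : ℕ) ≤ (π v : ℕ) ↔ r u ≤ r v) := by
    intro u hu v hv
    constructor
    · intro h
      rcases Nat.lt_or_ge (π u : ℕ) (π v : ℕ) with h' | h'
      · exact le_of_lt (hrmono u hu v h')
      · have : (π u : ℕ) = (π v : ℕ) := le_antisymm h h'
        rw [hπinj u v this]
    · intro h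
      by_contra hc
      push_neg at hc
      have := hrmono v hv u hc
      omega
  have hrlt : ∀ v ∈ C, r v < C.card := by
    intro v hv
    apply Finset.card_lt_card
    constructor
    · exact Finset.filter_subset _ _
    · intro hsub
      have := hsub hv
      simp only [Finset.mem_filter] at this
      omega
  -- bijections from C to Fin C.card
  have hcard : Fintype.card {x // x ∈ C} = C.card := Fintype.card_coe C
  let R : {x // x ∈ C} → Fin C.card := fun v => ⟨r v.1, hrlt v.1 v.2⟩
  have hRinj : Function.Injective R := by
    intro a b hab
    have h1 : r a.1 = r b.1 := congrArg Fin.val hab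
    have h2 : (π a.1 : ℕ) ≤ (π b.1 : ℕ) := (hriff a.1 a.2 b.1 b.2).mpr (le_of_eq h1)
    have h3 : (π b.1 : ℕ) ≤ (π a.1 : ℕ) := (hriff b.1 b.2 a.1 a.2).mpr (le_of_eq h1.symm)
    exact Subtype.ext (hπinj a.1 b.1 (le_antisymm h2 h3))
  have hRbij : Function.Bijective R :=
    (Fintype.bijective_iff_injective_and_card R).mpr ⟨hRinj, by rw [hcard, Fintype.card_fin]⟩
  let eR := Equiv.ofBijective R hRbij
  let P : {x // x ∈ C} → Fin C.card := fun v => ⟨ρ v.1, hρlt v.1 v.2⟩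
  have hPinj : Function.Injective P := by
    intro a b hab
    exact Subtype.ext (hρinj a.2 b.2 (congrArg Fin.val hab))
  have hPbij : Function.Bijective P :=
    (Fintype.bijective_iff_injective_and_card P).mpr ⟨hPinj, by rw [hcard, Fintype.card_fin]⟩
  let eP := Equiv.ofBijective P hPbij
  -- the pivot vertex and threshold
  let v₁ : Fin n := (eR.symm ⟨k - 1, by omega⟩).1
  have hv₁C : v₁ ∈ C := (eR.symm ⟨k - 1, by omega⟩).2
  have hrv₁ : r v₁ = k - 1 := by
    have := eR.apply_symm_apply ⟨k - 1, by omega⟩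
    exact congrArg Fin.val this
  set t : ℕ := (π v₁ : ℕ) + 1 with htdef
  -- construct σ
  let w : Fin n → Fin n := fun v => if h : v ∈ C then (eR.symm (eP ⟨v, h⟩)).1 else v
  have hwC : ∀ v (h : v ∈ C), w v ∈ C ∧ r (w v) = ρ v := by
    intro v h
    have hwv : w v = (eR.symm (eP ⟨v, h⟩)).1 := dif_pos h
    constructor
    · rw [hwv]; exact (eR.symm (eP ⟨v, h⟩)).2
    · have := eR.apply_symm_apply (eP ⟨v, h⟩)
      have h2 := congrArg Fin.val this
      rw [hwv]
      exact h2
  have hwout : ∀ v, v ∉ C → w v = v := fun v h => dif_neg h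
  have hwinj : Function.Injective w := by
    intro a b hab
    by_cases ha : a ∈ C <;> by_cases hb : b ∈ C
    · have h1 : w a = (eR.symm (eP ⟨a, ha⟩)).1 := dif_pos ha
      have h2 : w b = (eR.symm (eP ⟨b, hb⟩)).1 := dif_pos hb
      rw [h1, h2] at hab
      have := eP.injective (eR.symm.injective (Subtype.ext hab))
      exact congrArg Subtype.val this
    · exfalso; have := (hwC a ha).1; rw [hab, hwout b hb] at this; exact hb this
    · exfalso; have := (hwC b hb).1; rw [← hab, hwout a ha] at this; exact ha this
    · rw [hwout a ha, hwout b hb] at hab; exact hab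
  have hfinj : Function.Injective (fun v => π (w v)) := fun a b h => hwinj (π.injective h)
  let σ : Equiv.Perm (Fin n) := Equiv.ofBijective _ (Finite.injective_iff_bijective.mp hfinj)
  have hσ : ∀ v, σ v = π (w v) := fun v => rfl
  -- key threshold characterizations
  have key_σ : ∀ v ∈ C, ((σ v : ℕ) < t ↔ ρ v < k) := by
    intro v hv
    obtain ⟨hwv, hrw⟩ := hwC v hv
    rw [hσ]
    have : ((π (w v) : ℕ) < t ↔ (π (w v) : ℕ) ≤ (π v₁ : ℕ)) := by omega
    rw [this, hriff (w v) hwv v₁ hv₁C, hrw, hrv₁]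
    omega
  have key_π : ∀ v ∈ C, ((π v : ℕ) < t ↔ r v < k) := by
    intro v hv
    have : ((π v : ℕ) < t ↔ (π v : ℕ) ≤ (π v₁ : ℕ)) := by omega
    rw [this, hriff v hv v₁ hv₁C, hrv₁]
    omega
  have σ_out : ∀ v, v ∉ C → (σ v : ℕ) = (π v : ℕ) := by
    intro v h
    rw [hσ, hwout v h]
  -- split the cuts
  have hsplit : ∀ τ : Equiv.Perm (Fin n), cutAt E τ t =
      (E.filter (fun e => ((τ e.1 : ℕ) < t ∧ t ≤ (τ e.2 : ℕ)) ∧ e.1 ∈ C)).card +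
      (E.filter (fun e => ((τ e.1 : ℕ) < t ∧ t ≤ (τ e.2 : ℕ)) ∧ e.1 ∉ C)).card := by
    intro τ
    exact card_filter_split E _ (fun e => e.1 ∈ C)
  have hAσ : E.filter (fun e => ((σ e.1 : ℕ) < t ∧ t ≤ (σ e.2 : ℕ)) ∧ e.1 ∈ C) =
      E.filter (fun e => e.1 ∈ C ∧ e.2 ∈ C ∧ ρ e.1 < k ∧ k ≤ ρ e.2) := by
    apply Finset.filter_congr
    intro e he
    have h12 := hcomp e he
    constructor
    · rintro ⟨⟨ha, hb⟩, hc⟩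
      have hc2 : e.2 ∈ C := h12.mp hc
      refine ⟨hc, hc2, (key_σ e.1 hc).mp ha, ?_⟩
      by_contra hcon
      push_neg at hcon
      have := (key_σ e.2 hc2).mpr hcon
      omega
    · rintro ⟨h1, h2, h3, h4⟩
      refine ⟨⟨(key_σ e.1 h1).mpr h3, ?_⟩, h1⟩
      by_contra hcon
      push_neg at hcon
      have := (key_σ e.2 h2).mp hcon
      omega
  have hAπ : E.filter (fun e => ((π e.1 : ℕ) < t ∧ t ≤ (π e.2 : ℕ)) ∧ e.1 ∈ C) =
      E.filter (fun e => e.1 ∈ C ∧ e.2 ∈ C ∧ r e.1 < k ∧ k ≤ r e.2) := by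
    apply Finset.filter_congr
    intro e he
    have h12 := hcomp e he
    constructor
    · rintro ⟨⟨ha, hb⟩, hc⟩
      have hc2 : e.2 ∈ C := h12.mp hc
      refine ⟨hc, hc2, (key_π e.1 hc).mp ha, ?_⟩
      by_contra hcon
      push_neg at hcon
      have := (key_π e.2 hc2).mpr hcon
      omega
    · rintro ⟨h1, h2, h3, h4⟩
      refine ⟨⟨(key_π e.1 h1).mpr h3, ?_⟩, h1⟩
      by_contra hcon
      push_neg at hcon
      have := (key_π e.2 h2).mp hcon
      omega
  have hB : E.filter (fun e => ((σ e.1 : ℕ) < t ∧ t ≤ (σ e.2 : ℕ)) ∧ e.1 ∉ C) =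
      E.filter (fun e => ((π e.1 : ℕ) < t ∧ t ≤ (π e.2 : ℕ)) ∧ e.1 ∉ C) := by
    apply Finset.filter_congr
    intro e he
    constructor
    · rintro ⟨⟨ha, hb⟩, hc⟩
      have hc2 : e.2 ∉ C := fun h => hc ((hcomp e he).mpr h)
      rw [σ_out e.1 hc] at ha
      rw [σ_out e.2 hc2] at hb
      exact ⟨⟨ha, hb⟩, hc⟩
    · rintro ⟨⟨ha, hb⟩, hc⟩
      have hc2 : e.2 ∉ C := fun h => hc ((hcomp e he).mpr h)
      rw [← σ_out e.1 hc] at ha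
      rw [← σ_out e.2 hc2] at hb
      exact ⟨⟨ha, hb⟩, hc⟩
  have hmaxt := hmax σ t
  rw [hsplit σ, hsplit π, hAσ, hAπ, hB] at hmaxt
  show (E.filter (fun e => e.1 ∈ C ∧ e.2 ∈ C ∧ ρ e.1 < k ∧ k ≤ ρ e.2)).card ≤
    (E.filter (fun e => e.1 ∈ C ∧ e.2 ∈ C ∧ r e.1 < k ∧ k ≤ r e.2)).card
  omega
end

section
/- For any tournament D on n vertices, MaxDLA(D) = Σ_{k=1}^{n−1} m_k where m_k is the maximum over all k-subsets X of V(D) of the number of edges from X to V(D) \ X, and this maximum m_k is attained by taking X to be the k vertices of largest out-degree. -/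
open Finset

/-- Maximum size of a directed cut E(X, Xᶜ) over all k-subsets X. -/
def maxCutK {n : ℕ} (E : Finset (Fin n × Fin n)) (k : ℕ) : ℕ :=
  ((univ : Finset (Fin n)).powersetCard k).sup (dicut E)

/-- The set of the first `k` vertices of an arrangement. -/
lemma aux_card_prefix {n k : ℕ} (π : Equiv.Perm (Fin n)) (hk : k ≤ n) :
    ((univ : Finset (Fin n)).filter (fun v => (π v : ℕ) < k)).card = k := by
  have h1 : ((univ : Finset (Fin n)).filter (fun v => (π v : ℕ) < k)).card
      = ((univ : Finset (Fin n)).filter (fun j : Fin n => (j : ℕ) < k)).card := by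
    apply Finset.card_bij (fun v _ => π v)
    · intro a ha; simp at ha ⊢; exact ha
    · intro a _ b _ h; exact π.injective h
    · intro b hb; exact ⟨π.symm b, by simpa using hb, by simp⟩
  rw [h1]
  have h2 : ((univ : Finset (Fin n)).filter (fun j : Fin n => (j : ℕ) < k)).card
      = (Finset.range k).card := by
    apply Finset.card_bij (fun (v : Fin n) _ => (v : ℕ))
    · intro a ha; simp at ha ⊢; exact ha
    · intro a _ b _ h; exact Fin.val_injective h
    · intro b hb
      simp only [Finset.mem_range] at hb
      exact ⟨⟨b, lt_of_lt_of_le hb hk⟩, by simp [hb], rfl⟩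
  rw [h2, Finset.card_range]

/-- The key counting identity for tournaments:
`2 * dicut(X) + (|X|² − |X|) = 2 * Σ_{v ∈ X} outdeg(v)`. -/
lemma aux_dicut_eq {n : ℕ} (E : Finset (Fin n × Fin n))
    (hloop : ∀ v : Fin n, (v, v) ∉ E)
    (htour : ∀ u v : Fin n, u ≠ v → ((u, v) ∈ E ↔ (v, u) ∉ E))
    (X : Finset (Fin n)) :
    2 * dicut E X + (X.card * X.card - X.card) = 2 * ∑ v ∈ X, outdeg E v := by
  classical
  have hsum : ∑ v ∈ X, outdeg E v = (E.filter (fun e => e.1 ∈ X)).card := by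
    unfold outdeg
    simp only [Finset.card_filter]
    rw [Finset.sum_comm]
    congr 1; ext e
    rw [Finset.sum_ite_eq X e.1 (fun _ => 1)]
  have hsplit : (E.filter (fun e => e.1 ∈ X)).card =
      (E.filter (fun e => e.1 ∈ X ∧ e.2 ∈ X)).card + dicut E X := by
    unfold dicut
    rw [← Finset.filter_filter, ← Finset.filter_filter,
      Finset.card_filter_add_card_filter_not]
  have hinner : 2 * (E.filter (fun e => e.1 ∈ X ∧ e.2 ∈ X)).card = X.offDiag.card := by
    have heq : E.filter (fun e => e.1 ∈ X ∧ e.2 ∈ X) = X.offDiag.filter (· ∈ E) := by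
      ext ⟨a, b⟩
      simp only [Finset.mem_filter, Finset.mem_offDiag]
      constructor
      · rintro ⟨he, h1, h2⟩
        refine ⟨⟨h1, h2, ?_⟩, he⟩
        rintro rfl; exact hloop a he
      · rintro ⟨⟨h1, h2, _⟩, he⟩; exact ⟨he, h1, h2⟩
    have hbij : (X.offDiag.filter (fun e => ¬ e ∈ E)).card
        = (X.offDiag.filter (· ∈ E)).card := by
      apply Finset.card_bij (fun e _ => (e.2, e.1))
      · rintro ⟨a, b⟩ he
        simp only [Finset.mem_filter, Finset.mem_offDiag] at he ⊢
        obtain ⟨⟨h1, h2, hne⟩, hnE⟩ := he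
        refine ⟨⟨h2, h1, fun h => hne h.symm⟩, ?_⟩
        exact (htour b a (fun h => hne h.symm)).mpr hnE
      · rintro ⟨a, b⟩ _ ⟨c, d⟩ _ h
        simp only [Prod.mk.injEq] at h ⊢
        exact ⟨h.2, h.1⟩
      · rintro ⟨a, b⟩ he
        simp only [Finset.mem_filter, Finset.mem_offDiag] at he
        obtain ⟨⟨h1, h2, hne⟩, hE⟩ := he
        refine ⟨(b, a), ?_, rfl⟩
        simp only [Finset.mem_filter, Finset.mem_offDiag]
        exact ⟨⟨h2, h1, fun h => hne h.symm⟩, (htour a b hne).mp hE⟩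
    have hpart : (X.offDiag.filter (· ∈ E)).card
        + (X.offDiag.filter (fun e => ¬ e ∈ E)).card = X.offDiag.card :=
      Finset.card_filter_add_card_filter_not _
    rw [heq]
    omega
  rw [hsum, hsplit, Finset.offDiag_card] at *
  omega

/-- If every element of `X` has `f`-value at least that of every element outside `X`,
then `X` maximizes `Σ f` among sets of the same cardinality. -/
lemma aux_sum_le {n : ℕ} (f : Fin n → ℕ) (X Y : Finset (Fin n))
    (h : ∀ x ∈ X, ∀ y ∉ X, f y ≤ f x) (hcard : Y.card = X.card) :
    ∑ v ∈ Y, f v ≤ ∑ v ∈ X, f v := by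
  classical
  rw [← Finset.sum_inter_add_sum_sdiff Y X f, ← Finset.sum_inter_add_sum_sdiff X Y f]
  have hc : (Y \ X).card = (X \ Y).card := by
    have h1 := Finset.card_inter_add_card_sdiff Y X
    have h2 := Finset.card_inter_add_card_sdiff X Y
    have hic : (Y ∩ X).card = (X ∩ Y).card := by rw [Finset.inter_comm]
    omega
  have hsum : ∑ v ∈ Y ∩ X, f v = ∑ v ∈ X ∩ Y, f v := by rw [Finset.inter_comm]
  have hdiff : ∑ v ∈ Y \ X, f v ≤ ∑ v ∈ X \ Y, f v := by
    have eqv := Finset.equivOfCardEq hc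
    calc ∑ v ∈ Y \ X, f v = ∑ a : {x // x ∈ Y \ X}, f a := (Finset.sum_coe_sort _ f).symm
      _ ≤ ∑ a : {x // x ∈ Y \ X}, f (eqv a) := by
          apply Finset.sum_le_sum
          intro a _
          have hy : (a : Fin n) ∉ X := (Finset.mem_sdiff.mp a.2).2
          have hx : ((eqv a : Fin n)) ∈ X := (Finset.mem_sdiff.mp (eqv a).2).1
          exact h _ hx _ hy
      _ = ∑ b : {x // x ∈ X \ Y}, f b := Equiv.sum_comp eqv (fun b => f (b : Fin n))
      _ = ∑ v ∈ X \ Y, f v := Finset.sum_coe_sort _ f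
  omega

/-- The value of an arrangement is the sum of its cut sizes. -/
lemma aux_valN_eq {n : ℕ} (E : Finset (Fin n × Fin n)) (π : Equiv.Perm (Fin n)) :
    valN E π = ∑ k ∈ Icc 1 (n - 1), cutAt E π k := by
  unfold valN cutAt
  have key : ∀ e ∈ E, ((π e.2 : ℕ) - (π e.1 : ℕ)) =
      ∑ k ∈ Icc 1 (n - 1), (if (π e.1 : ℕ) < k ∧ k ≤ (π e.2 : ℕ) then 1 else 0) := by
    intro e _
    rw [← Finset.card_filter]
    have : (Icc 1 (n - 1)).filter (fun k => (π e.1 : ℕ) < k ∧ k ≤ (π e.2 : ℕ))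
        = Ioc (π e.1 : ℕ) (π e.2 : ℕ) := by
      ext k
      simp only [Finset.mem_filter, Finset.mem_Icc, Finset.mem_Ioc]
      have hb : (π e.2 : ℕ) < n := (π e.2).isLt
      omega
    rw [this, Nat.card_Ioc]
  rw [Finset.sum_congr rfl key, Finset.sum_comm]
  congr 1; ext k
  rw [← Finset.card_filter]

/-- The k-th cut of an arrangement is the dicut of its k-element prefix. -/
lemma aux_cutAt_eq_dicut {n : ℕ} (E : Finset (Fin n × Fin n)) (π : Equiv.Perm (Fin n))
    (k : ℕ) :
    cutAt E π k = dicut E ((univ : Finset (Fin n)).filter (fun v => (π v : ℕ) < k)) := by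
  unfold cutAt dicut
  congr 1
  ext e
  simp only [Finset.mem_filter, Finset.mem_univ, true_and, not_lt]

/-- for a tournament, MaxDLA(D) = Σ_{k=1}^{n-1} m_k, where m_k is the
maximum size of a directed cut with |X| = k, and m_k is attained by any set of k
vertices of largest out-degree. -/
theorem stmt17 (n : ℕ) (E : Finset (Fin n × Fin n))
    (hloop : ∀ v : Fin n, (v, v) ∉ E)
    (htour : ∀ u v : Fin n, u ≠ v → ((u, v) ∈ E ↔ (v, u) ∉ E)) :
    maxDLA E = ∑ k ∈ Icc 1 (n - 1), maxCutK E k ∧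
    ∀ X : Finset (Fin n), (∀ x ∈ X, ∀ y ∉ X, outdeg E y ≤ outdeg E x) →
      dicut E X = maxCutK E X.card := by
  classical
  -- Part 2 first.
  have part2 : ∀ X : Finset (Fin n), (∀ x ∈ X, ∀ y ∉ X, outdeg E y ≤ outdeg E x) →
      dicut E X = maxCutK E X.card := by
    intro X hX
    apply le_antisymm
    · exact Finset.le_sup (Finset.mem_powersetCard_univ.mpr rfl)
    · apply Finset.sup_le
      intro Y hY
      rw [Finset.mem_powersetCard_univ] at hY
      have h1 := aux_dicut_eq E hloop htour X
      have h2 := aux_dicut_eq E hloop htour Y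
      have h3 := aux_sum_le (outdeg E) X Y hX hY
      rw [hY] at h2
      omega
  refine ⟨?_, part2⟩
  apply le_antisymm
  · -- every arrangement's value is at most the sum of maximal cuts
    apply Finset.sup_le
    intro π _
    rw [aux_valN_eq E π]
    apply Finset.sum_le_sum
    intro k hk
    rw [Finset.mem_Icc] at hk
    have hkn : k ≤ n := by omega
    rw [aux_cutAt_eq_dicut E π k]
    exact Finset.le_sup (Finset.mem_powersetCard_univ.mpr (aux_card_prefix π hkn))
  · -- the arrangement by decreasing out-degree attains the bound
    set f : Fin n → ℤ := fun v => -(outdeg E v : ℤ) with hf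
    set σ := Tuple.sort f with hσ
    set π := σ⁻¹ with hπ
    have hmono := Tuple.monotone_sort f
    have hval : valN E π = ∑ k ∈ Icc 1 (n - 1), maxCutK E k := by
      rw [aux_valN_eq E π]
      apply Finset.sum_congr rfl
      intro k hk
      rw [Finset.mem_Icc] at hk
      have hkn : k ≤ n := by omega
      rw [aux_cutAt_eq_dicut E π k]
      set X := (univ : Finset (Fin n)).filter (fun v => (π v : ℕ) < k) with hX
      have hcard : X.card = k := aux_card_prefix π hkn
      have hprop : ∀ x ∈ X, ∀ y ∉ X, outdeg E y ≤ outdeg E x := by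
        intro x hx y hy
        rw [hX, Finset.mem_filter] at hx hy
        push_neg at hy
        have hlt : π x < π y := by
          have := hy (Finset.mem_univ y)
          exact Fin.lt_def.mpr (lt_of_lt_of_le hx.2 this)
        have hle : f (σ (π x)) ≤ f (σ (π y)) := hmono (le_of_lt hlt)
        have hx' : σ (π x) = x := by simp [hπ]
        have hy' : σ (π y) = y := by simp [hπ]
        rw [hx', hy'] at hle
        simp only [hf, neg_le_neg_iff, Int.ofNat_le] at hle
        exact_mod_cast hle
      rw [part2 X hprop, hcard]
    calc ∑ k ∈ Icc 1 (n - 1), maxCutK E k = valN E π := hval.symm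
      _ ≤ maxDLA E := Finset.le_sup (Finset.mem_univ π)
end

section
/- Let G be an undirected graph, f: V(G) → ℤ a weight function, e = {u,v} an edge of G, and π an arrangement with π(u) < π(v). Define f_v by f_v(v) = f(v) − 1 and f_v(x) = f(x) otherwise. Then the weighted value of π on (G, f) equals the weighted value of π on (G − e, f_v). -/
open Finset

/-- Level (weighted) of the vertex at 0-indexed position p in the arrangement π of the
undirected graph A (a symmetric irreflexive edge relation) with weight function f:
f(v) minus the number of neighbours of v at positions ≤ p. -/
def wlevel {n : ℕ} (A : Finset (Fin n × Fin n)) (f : Fin n → ℤ)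
    (π : Equiv.Perm (Fin n)) (p : ℕ) : ℤ :=
  ∑ v ∈ univ.filter (fun v => (π v : ℕ) = p),
    (f v - ((univ.filter (fun u => (v, u) ∈ A ∧ (π u : ℕ) ≤ p)).card : ℤ))

/-- Weighted value of an arrangement: Σ_{i=1}^{n-1} Σ_{j=1}^{i} l(v_j). -/
def wval {n : ℕ} (A : Finset (Fin n × Fin n)) (f : Fin n → ℤ)
    (π : Equiv.Perm (Fin n)) : ℤ :=
  ∑ i ∈ range (n - 1), ∑ j ∈ range (i + 1), wlevel A f π j

/-- deleting an edge e = {u,v} with π(u) < π(v) and decreasing the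
weight of v by one leaves the weighted value of the arrangement unchanged. -/
theorem stmt18 (n : ℕ) (A : Finset (Fin n × Fin n))
    (hsym : ∀ u v : Fin n, (u, v) ∈ A → (v, u) ∈ A)
    (hirr : ∀ v : Fin n, (v, v) ∉ A)
    (f : Fin n → ℤ) (u v : Fin n) (he : (u, v) ∈ A)
    (π : Equiv.Perm (Fin n)) (huv : (π u : ℕ) < (π v : ℕ)) :
    wval A f π =
      wval (A \ {(u, v), (v, u)}) (Function.update f v (f v - 1)) π := by
  have huvne : u ≠ v := fun h => by simp [h] at huv
  have key : ∀ p : ℕ, wlevel A f π p =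
      wlevel (A \ {(u, v), (v, u)}) (Function.update f v (f v - 1)) π p := by
    intro p
    unfold wlevel
    apply Finset.sum_congr rfl
    intro w hw
    simp only [Finset.mem_filter, Finset.mem_univ, true_and] at hw
    by_cases hwv : w = v
    · subst hwv
      subst hw
      have hne : ¬ w = u := fun h => huvne (h ▸ rfl)
      have hS' : (univ.filter (fun x => (w, x) ∈ A \ {(u, w), (w, u)} ∧ (π x : ℕ) ≤ (π w : ℕ)))
          = (univ.filter (fun x => (w, x) ∈ A ∧ (π x : ℕ) ≤ (π w : ℕ))).erase u := by
        ext x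
        simp only [Finset.mem_erase, Finset.mem_filter, Finset.mem_univ, true_and,
          Finset.mem_sdiff, Finset.mem_insert, Finset.mem_singleton, Prod.mk.injEq, not_or]
        constructor
        · rintro ⟨⟨hA, h1, h2⟩, hle⟩
          exact ⟨h2, hA, hle⟩
        · rintro ⟨hxu, hA, hle⟩
          exact ⟨⟨hA, fun h => hne h.1, hxu⟩, hle⟩
      have huS : u ∈ (univ.filter (fun x => (w, x) ∈ A ∧ (π x : ℕ) ≤ (π w : ℕ))) := by
        simp only [Finset.mem_filter, Finset.mem_univ, true_and]
        exact ⟨hsym u w he, le_of_lt huv⟩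
      rw [hS', Finset.card_erase_of_mem huS, Function.update_self]
      have hpos : 0 < (univ.filter (fun x => (w, x) ∈ A ∧ (π x : ℕ) ≤ (π w : ℕ))).card :=
        Finset.card_pos.mpr ⟨u, huS⟩
      have h1 := Nat.cast_sub (Nat.one_le_iff_ne_zero.mpr hpos.ne') (R := ℤ)
      push_cast [h1]
      ring
    · rw [Function.update_of_ne hwv]
      have hset : (univ.filter (fun x => (w, x) ∈ A \ {(u, v), (v, u)} ∧ (π x : ℕ) ≤ p))
          = (univ.filter (fun x => (w, x) ∈ A ∧ (π x : ℕ) ≤ p)) := by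
        ext x
        simp only [Finset.mem_filter, Finset.mem_univ, true_and, Finset.mem_sdiff,
          Finset.mem_insert, Finset.mem_singleton, Prod.mk.injEq, not_or]
        constructor
        · rintro ⟨⟨hA, _, _⟩, hle⟩
          exact ⟨hA, hle⟩
        · rintro ⟨hA, hle⟩
          refine ⟨⟨hA, fun h => ?_, fun h => hwv h.1⟩, hle⟩
          obtain ⟨rfl, rfl⟩ := h
          omega
      rw [hset]
  unfold wval
  exact Finset.sum_congr rfl fun i _ => Finset.sum_congr rfl fun j _ => key j
end
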